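/- arXiv:2306.10719 — 4 statements merged into one kernel-verified Lean document; each statement's English description precedes it below -/
import Mathlib

section
/- Let C : ℤ → U(2) be a coin satisfying the standing Assumption, let U = S∘C be the associated quantum walk operator on ℋ = ℓ²(ℤ;ℂ²), and let J ⊂ ℝ be a bounded interval containing chs(C−I₂). Then there exists a function F : ℂ → B(ℋ) (bounded operators on ℋ) which is meromorphic on all of ℂ and satisfies F(λ) = 1_J (U−λ)⁻¹ 1_J for every λ ∈ ℂ with |λ| > 1 (for such λ the operator U−λ is boundedly invertible since U is unitary). Moreover, if J ∩ ℤ ≠ ∅ then F has a pole at λ = 0, i.e. F does not extend analytically to λ = 0. -/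
noncomputable section

open scoped ComplexConjugate

/-- A state: a map ℤ → ℂ², components `ψ x 0` (left, ψ^L) and `ψ x 1` (right, ψ^R). -/
abbrev QWState := ℤ → Fin 2 → ℂ

/-- The quantum walk operator U = S∘C acting pointwise:
`(Uψ)(x) = ((C(x+1)ψ(x+1))₁, (C(x−1)ψ(x−1))₂)`. -/
def qwalk (C : ℤ → Matrix (Fin 2) (Fin 2) ℂ) (ψ : QWState) : QWState :=
  fun x => ![(C (x + 1)).mulVec (ψ (x + 1)) 0, (C (x - 1)).mulVec (ψ (x - 1)) 1]

/-- The standing Assumption on the coin. -/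
structure CoinAssumption (C : ℤ → Matrix (Fin 2) (Fin 2) ℂ) : Prop where
  unitary : ∀ x, C x ∈ Matrix.unitaryGroup (Fin 2) ℂ
  d11 : ∀ x, C x 0 0 ≠ 0
  d22 : ∀ x, C x 1 1 ≠ 0
  fin : Set.Finite {x : ℤ | C x ≠ 1}

/-- Outgoing: ψ^L vanishes far right, ψ^R vanishes far left. -/
def Outgoing (ψ : QWState) : Prop :=
  ∃ r : ℤ, 0 < r ∧ ∀ x : ℤ, r < x → ψ x 0 = 0 ∧ ψ (-x) 1 = 0

/-- Indicator (as a complex factor) of the integer interval [a,b]. -/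
def jind (a b x : ℤ) : ℂ := if a ≤ x ∧ x ≤ b then 1 else 0

/-- The convex hull chs(C−I₂) of the support of C−I₂, as a subset of ℤ. -/
def chsSet (C : ℤ → Matrix (Fin 2) (Fin 2) ℂ) : Set ℤ :=
  {x | ∃ y z : ℤ, C y ≠ 1 ∧ C z ≠ 1 ∧ y ≤ x ∧ x ≤ z}

/-- The Hilbert space ℋ = ℓ²(ℤ; ℂ²). -/
abbrev H2 := lp (fun _ : ℤ => EuclideanSpace ℂ (Fin 2)) 2

/-- Pointwise value of an element of ℋ. -/
def ev (ψ : H2) (x : ℤ) (i : Fin 2) : ℂ := (ψ : ∀ _ : ℤ, EuclideanSpace ℂ (Fin 2)) x i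

/-!
Let `K` be the matrix of `1_J U 1_J` on the `2 |J|` sites of `J`. Beyond `J` the walk is a free
shift, so a bounded solution of `(U - λ) η = 1_J ψ` with `|λ| > 1` has `η^L = 0` right of `J` and
`η^R = 0` left of `J` (otherwise it grows like `λⁿ`); on `J` the equation then reads
`(K - λ) η|_J = ψ|_J`. Since `U` preserves the `ℓ²`-norm, `K` is a contraction, so `K - λ` is
invertible for `|λ| > 1` and `F(λ) := 1_J (K - λ)⁻¹ 1_J` is the cut-off resolvent there; by
Cramer's rule it is meromorphic on `ℂ`. The right-moving component at the left end `a` of `J` is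
fed only from `a - 1 ∉ J`, so its row of `K` vanishes and the corresponding diagonal entry of
`(K - λ)⁻¹` is `-1/λ`: a pole at `0`.
-/

open Matrix Filter Topology
open scoped ENNReal

namespace QuantumWalk

lemma eq_zero_of_bounded_of_succ_eq_mul {𝕜 : Type*} [NormedDivisionRing 𝕜] {u : ℕ → 𝕜}
    {lam : 𝕜} (hlam : 1 < ‖lam‖) (hu : ∀ n, u (n + 1) = lam * u n) {B : ℝ}
    (hB : ∀ n, ‖u n‖ ≤ B) (n : ℕ) : u n = 0 := by
  have hpow : ∀ n, u n = lam ^ n * u 0 := fun n => by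
    induction n with
    | zero => simp
    | succ k ih => rw [hu, ih, pow_succ', mul_assoc]
  suffices h0 : u 0 = 0 by rw [hpow, h0, mul_zero]
  by_contra h0
  have hpos : 0 < ‖u 0‖ := norm_pos_iff.mpr h0
  obtain ⟨m, hm⟩ := pow_unbounded_of_one_lt (B / ‖u 0‖) hlam
  have := hB m
  rw [hpow, norm_mul, norm_pow] at this
  rw [div_lt_iff₀ hpos] at hm
  linarith

lemma sum_enorm_sq_mulVec_of_mem_unitaryGroup {𝕜 : Type*} [RCLike 𝕜] {n : Type*} [Fintype n]
    [DecidableEq n] {A : Matrix n n 𝕜} (hA : A ∈ unitaryGroup n 𝕜) (v : n → 𝕜) :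
    ∑ i, ‖(A *ᵥ v) i‖ₑ ^ 2 = ∑ i, ‖v i‖ₑ ^ 2 := by
  have h := congrArg (fun r : ℝ => ENNReal.ofReal (r ^ 2)) <|
    ContinuousLinearMap.norm_map_of_mem_unitary
      (Unitary.map_mem (toEuclideanCLM (n := n) (𝕜 := 𝕜)) hA) (WithLp.toLp 2 v)
  simp only [EuclideanSpace.norm_sq_eq] at h
  rw [ENNReal.ofReal_sum_of_nonneg (fun _ _ => by positivity),
    ENNReal.ofReal_sum_of_nonneg (fun _ _ => by positivity)] at h
  simpa [← ofReal_norm, ENNReal.ofReal_pow] using h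

lemma det_sub_smul_one_ne_zero_of_contraction {𝕜 : Type*} [NormedField 𝕜] {ι : Type*}
    [Fintype ι] [DecidableEq ι] {K : Matrix ι ι 𝕜}
    (hK : ∀ v, ∑ p, ‖(K *ᵥ v) p‖ₑ ^ 2 ≤ ∑ p, ‖v p‖ₑ ^ 2) {lam : 𝕜} (hlam : 1 < ‖lam‖) :
    (K - lam • 1).det ≠ 0 := by
  intro hdet
  obtain ⟨v, hv0, hv⟩ := exists_mulVec_eq_zero_iff.mpr hdet
  rw [sub_mulVec, smul_mulVec, one_mulVec, sub_eq_zero] at hv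
  have hle := hK v
  simp only [hv, Pi.smul_apply, smul_eq_mul, enorm_mul, mul_pow, ← Finset.mul_sum] at hle
  have hfin : ∑ p, ‖v p‖ₑ ^ 2 ≠ ∞ := by simp [enorm_ne_top]
  have hzero : ∑ p, ‖v p‖ₑ ^ 2 = 0 := by
    by_contra hne
    have h1 : 1 < ‖lam‖ₑ ^ 2 := by
      rw [← ofReal_norm, ← ENNReal.ofReal_pow (norm_nonneg _)]
      exact ENNReal.one_lt_ofReal.mpr (one_lt_pow₀ hlam two_ne_zero)
    have := ENNReal.mul_lt_mul_right hne hfin h1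
    rw [mul_one, mul_comm] at this
    exact hle.not_gt this
  exact hv0 (funext fun p => by simpa using (Finset.sum_eq_zero_iff.mp hzero) p (Finset.mem_univ p))

lemma mul_inv_sub_smul_one_apply_self_of_row_eq_zero {K : Type*} [Field K] {ι : Type*}
    [Fintype ι] [DecidableEq ι] {M : Matrix ι ι K} {p : ι} (hM : ∀ q, M p q = 0) {lam : K}
    (hdet : (M - lam • 1).det ≠ 0) : lam * (M - lam • 1)⁻¹ p p = -1 := by
  have h := congrFun (congrFun (mul_nonsing_inv _ (Ne.isUnit hdet)) p) p
  simp only [mul_apply, Matrix.sub_apply, hM, Matrix.smul_apply, one_apply, smul_eq_mul, mul_ite,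
    mul_one, mul_zero, zero_sub, neg_mul, ite_mul, zero_mul, Finset.sum_neg_distrib,
    Finset.sum_ite_eq, Finset.mem_univ, if_true] at h
  linear_combination -h

section MatrixInverse

variable {𝕜 : Type*} [NontriviallyNormedField 𝕜] {n : Type*} [Fintype n] [DecidableEq n]
  {A : 𝕜 → Matrix n n 𝕜} {z : 𝕜}

lemma analyticAt_det_of_entries (hA : ∀ i j, AnalyticAt 𝕜 (fun w => A w i j) z) :
    AnalyticAt 𝕜 (fun w => (A w).det) z := by
  simp only [det_apply']
  exact Finset.analyticAt_fun_sum _ fun σ _ =>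
    analyticAt_const.mul (Finset.analyticAt_fun_prod _ fun i _ => hA (σ i) i)

lemma analyticAt_adjugate_apply (hA : ∀ i j, AnalyticAt 𝕜 (fun w => A w i j) z) (i j : n) :
    AnalyticAt 𝕜 (fun w => (A w).adjugate i j) z := by
  simp only [adjugate_apply]
  refine analyticAt_det_of_entries fun k l => ?_
  by_cases hk : k = j
  · simp only [hk, updateRow_self]
    exact analyticAt_const
  · simpa only [updateRow_ne hk] using hA k l

lemma meromorphicAt_inv_apply (hA : ∀ i j, AnalyticAt 𝕜 (fun w => A w i j) z) (i j : n) :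
    MeromorphicAt (fun w => (A w)⁻¹ i j) z := by
  simp only [inv_def, Matrix.smul_apply, Ring.inverse_eq_inv', smul_eq_mul]
  exact (analyticAt_det_of_entries hA).meromorphicAt.inv.mul
    (analyticAt_adjugate_apply hA i j).meromorphicAt

lemma meromorphicAt_linearMap_inv {E : Type*} [NormedAddCommGroup E] [NormedSpace 𝕜 E]
    (Φ : Matrix n n 𝕜 →ₗ[𝕜] E) (hA : ∀ i j, AnalyticAt 𝕜 (fun w => A w i j) z) :
    MeromorphicAt (fun w => Φ (A w)⁻¹) z := by
  have hΦ : ∀ B : Matrix n n 𝕜, Φ B = ∑ i, ∑ j, B i j • Φ (single i j 1) := fun B => by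
    conv_lhs => rw [matrix_eq_sum_single B]
    simp only [map_sum, ← map_smul, smul_single, smul_eq_mul, mul_one]
  rw [show (fun w => Φ (A w)⁻¹) = _ from funext fun w => hΦ (A w)⁻¹]
  exact MeromorphicAt.fun_sum fun i _ => MeromorphicAt.fun_sum fun j _ =>
    (meromorphicAt_inv_apply hA i j).smul analyticAt_const.meromorphicAt

end MatrixInverse

lemma not_eventuallyEq_neg_inv_of_continuousAt {g : ℂ → ℂ} (hg : ContinuousAt g 0) :
    ¬ g =ᶠ[𝓝[≠] 0] fun z => -z⁻¹ := by
  intro h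
  have h0 : Tendsto (fun z => z * g z) (𝓝[≠] 0) (𝓝 0) := by
    simpa using (continuousAt_id.fun_mul hg).tendsto.mono_left nhdsWithin_le_nhds
  have h1 : Tendsto (fun z => z * g z) (𝓝[≠] 0) (𝓝 (-1)) := by
    refine tendsto_const_nhds.congr' ?_
    filter_upwards [h, self_mem_nhdsWithin] with z hz hz0
    rw [hz, mul_neg, mul_inv_cancel₀ hz0]
  exact absurd (tendsto_nhds_unique h0 h1) (by norm_num)

/-- Valued in `ℝ≥0∞`, so that reindexing and comparing sums needs no summability conditions. -/
def mass (ψ : QWState) : ℝ≥0∞ := ∑' x, ∑ i, ‖ψ x i‖ₑ ^ 2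

def shift (φ : QWState) : QWState := fun x => ![φ (x + 1) 0, φ (x - 1) 1]

def coin (C : ℤ → Matrix (Fin 2) (Fin 2) ℂ) (φ : QWState) : QWState := fun x => C x *ᵥ φ x

lemma qwalk_eq_shift_coin (C : ℤ → Matrix (Fin 2) (Fin 2) ℂ) (ψ : QWState) :
    qwalk C ψ = shift (coin C ψ) := rfl

lemma mass_shift (φ : QWState) : mass (shift φ) = mass φ := by
  simp only [mass, shift, Fin.sum_univ_two, Matrix.cons_val_zero, Matrix.cons_val_one,
    ENNReal.tsum_add]
  exact congrArg₂ (· + ·) ((Equiv.addRight 1).tsum_eq (fun x => ‖φ x 0‖ₑ ^ 2))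
    ((Equiv.subRight 1).tsum_eq (fun x => ‖φ x 1‖ₑ ^ 2))

lemma mass_coin {C : ℤ → Matrix (Fin 2) (Fin 2) ℂ} (hC : ∀ x, C x ∈ unitaryGroup (Fin 2) ℂ)
    (φ : QWState) : mass (coin C φ) = mass φ := by
  simp only [mass, coin, sum_enorm_sq_mulVec_of_mem_unitaryGroup (hC _)]

lemma mass_qwalk {C : ℤ → Matrix (Fin 2) (Fin 2) ℂ} (hC : ∀ x, C x ∈ unitaryGroup (Fin 2) ℂ)
    (ψ : QWState) : mass (qwalk C ψ) = mass ψ := by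
  rw [qwalk_eq_shift_coin, mass_shift, mass_coin hC]

section Cutoff

variable (a b : ℤ)

abbrev Site := ↥(Finset.Icc a b) × Fin 2

def extend : (Site a b → ℂ) →ₗ[ℂ] QWState where
  toFun v x i := if h : x ∈ Finset.Icc a b then v (⟨x, h⟩, i) else 0
  map_add' v w := by
    funext x i; by_cases h : x ∈ Finset.Icc a b <;> simp only [h, dite_true, dite_false,
      Pi.add_apply, add_zero]
  map_smul' c v := by
    funext x i; by_cases h : x ∈ Finset.Icc a b <;> simp only [h, dite_true, dite_false,
      Pi.smul_apply, smul_zero, RingHom.id_apply]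

def restrict : QWState →ₗ[ℂ] (Site a b → ℂ) where
  toFun ψ p := ψ p.1 p.2
  map_add' _ _ := rfl
  map_smul' _ _ := rfl

variable {a b}

lemma extend_apply_of_mem {x : ℤ} (hx : x ∈ Finset.Icc a b) (v : Site a b → ℂ) (i : Fin 2) :
    extend a b v x i = v (⟨x, hx⟩, i) := dif_pos hx

lemma extend_apply_of_notMem {x : ℤ} (hx : x ∉ Finset.Icc a b) (v : Site a b → ℂ) :
    extend a b v x = 0 := funext fun _ => dif_neg hx

@[simp]
lemma restrict_extend (v : Site a b → ℂ) : restrict a b (extend a b v) = v :=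
  funext fun p => extend_apply_of_mem p.1.2 v p.2

lemma extend_restrict (ψ : QWState) (x : ℤ) (i : Fin 2) :
    extend a b (restrict a b ψ) x i = jind a b x * ψ x i := by
  by_cases hx : x ∈ Finset.Icc a b
  · rw [extend_apply_of_mem hx, jind, if_pos (Finset.mem_Icc.mp hx), one_mul]; rfl
  · rw [extend_apply_of_notMem hx, jind, if_neg (mt Finset.mem_Icc.mpr hx), zero_mul]; rfl

lemma mass_extend (v : Site a b → ℂ) : mass (extend a b v) = ∑ p, ‖v p‖ₑ ^ 2 := by
  rw [mass, tsum_eq_sum (s := Finset.Icc a b) fun x hx => by simp [extend_apply_of_notMem hx],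
    Fintype.sum_prod_type, ← Finset.sum_coe_sort (Finset.Icc a b)]
  exact Finset.sum_congr rfl fun x _ => by simp only [extend_apply_of_mem x.2]

lemma sum_enorm_sq_restrict_le_mass (ψ : QWState) :
    ∑ p, ‖restrict a b ψ p‖ₑ ^ 2 ≤ mass ψ := by
  rw [Fintype.sum_prod_type]
  exact (Finset.sum_coe_sort (Finset.Icc a b) fun x => ∑ i, ‖ψ x i‖ₑ ^ 2).trans_le
    (ENNReal.sum_le_tsum _)

variable (a b)

def qwalkₗ (C : ℤ → Matrix (Fin 2) (Fin 2) ℂ) : QWState →ₗ[ℂ] QWState where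
  toFun := qwalk C
  map_add' ψ φ := by ext x i; fin_cases i <;> simp [qwalk, mulVec_add]
  map_smul' c ψ := by ext x i; fin_cases i <;> simp [qwalk, mulVec_smul]

def compression (C : ℤ → Matrix (Fin 2) (Fin 2) ℂ) : Matrix (Site a b) (Site a b) ℂ :=
  LinearMap.toMatrix' (restrict a b ∘ₗ qwalkₗ C ∘ₗ extend a b)

variable {a b}

lemma compression_mulVec (C : ℤ → Matrix (Fin 2) (Fin 2) ℂ) (v : Site a b → ℂ) :
    compression a b C *ᵥ v = restrict a b (qwalk C (extend a b v)) :=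
  LinearMap.toMatrix'_mulVec _ v

lemma sum_enorm_sq_compression_mulVec_le {C : ℤ → Matrix (Fin 2) (Fin 2) ℂ}
    (hC : ∀ x, C x ∈ unitaryGroup (Fin 2) ℂ) (v : Site a b → ℂ) :
    ∑ p, ‖(compression a b C *ᵥ v) p‖ₑ ^ 2 ≤ ∑ p, ‖v p‖ₑ ^ 2 := by
  calc ∑ p, ‖(compression a b C *ᵥ v) p‖ₑ ^ 2
      ≤ mass (qwalk C (extend a b v)) := by
        rw [compression_mulVec]; exact sum_enorm_sq_restrict_le_mass _
    _ = ∑ p, ‖v p‖ₑ ^ 2 := by rw [mass_qwalk hC, mass_extend]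

end Cutoff

lemma coin_eq_one_of_lt_or_lt {C : ℤ → Matrix (Fin 2) (Fin 2) ℂ} {a b : ℤ}
    (hJC : ∀ x : ℤ, C x ≠ 1 → a ≤ x ∧ x ≤ b) {x : ℤ} (hx : x < a ∨ b < x) : C x = 1 :=
  not_not.mp fun h => by have := hJC x h; omega

lemma restrict_qwalk_extend_restrict {C : ℤ → Matrix (Fin 2) (Fin 2) ℂ} {a b : ℤ}
    (hJC : ∀ x : ℤ, C x ≠ 1 → a ≤ x ∧ x ≤ b) {η : QWState}
    (h0 : ∀ x, b < x → η x 0 = 0) (h1 : ∀ x, x < a → η x 1 = 0) :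
    restrict a b (qwalk C (extend a b (restrict a b η))) = restrict a b (qwalk C η) := by
  have hJ : ∀ y ∈ Finset.Icc a b, extend a b (restrict a b η) y = η y := fun y hy =>
    funext fun i => by rw [extend_restrict, jind, if_pos (Finset.mem_Icc.mp hy), one_mul]
  funext ⟨⟨x, hx⟩, i⟩
  rw [Finset.mem_Icc] at hx
  fin_cases i
  · show (C (x + 1) *ᵥ extend a b (restrict a b η) (x + 1)) 0 = (C (x + 1) *ᵥ η (x + 1)) 0
    by_cases hxb : x + 1 ≤ b
    · rw [hJ _ (Finset.mem_Icc.mpr (by omega))]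
    · rw [extend_apply_of_notMem (by simp; omega), coin_eq_one_of_lt_or_lt hJC (by omega),
        one_mulVec, one_mulVec, h0 _ (by omega)]; rfl
  · show (C (x - 1) *ᵥ extend a b (restrict a b η) (x - 1)) 1 = (C (x - 1) *ᵥ η (x - 1)) 1
    by_cases hxa : a ≤ x - 1
    · rw [hJ _ (Finset.mem_Icc.mpr (by omega))]
    · rw [extend_apply_of_notMem (by simp; omega), coin_eq_one_of_lt_or_lt hJC (by omega),
        one_mulVec, one_mulVec, h1 _ (by omega)]; rfl

def ResolventEq (C : ℤ → Matrix (Fin 2) (Fin 2) ℂ) (a b : ℤ) (lam : ℂ) (η ψ : QWState) : Prop :=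
  ∀ x i, qwalk C η x i - lam * η x i = jind a b x * ψ x i

namespace ResolventEq

variable {C : ℤ → Matrix (Fin 2) (Fin 2) ℂ} {a b : ℤ} {lam : ℂ} {η ψ : QWState}

lemma qwalk_eq_mul_of_lt_or_lt (hE : ResolventEq C a b lam η ψ) {x : ℤ} (hx : x < a ∨ b < x)
    (i : Fin 2) : qwalk C η x i = lam * η x i := by
  have h := hE x i
  rw [jind, if_neg (by omega), zero_mul, sub_eq_zero] at h
  exact h

lemma left_eq_zero_of_lt (hE : ResolventEq C a b lam η ψ) (hJC : ∀ x : ℤ, C x ≠ 1 → a ≤ x ∧ x ≤ b)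
    (hlam : 1 < ‖lam‖) {B : ℝ} (hB : ∀ x i, ‖η x i‖ ≤ B) {x : ℤ} (hx : b < x) : η x 0 = 0 := by
  have hstep : ∀ n : ℕ, η (b + 1 + (n + 1 : ℕ)) 0 = lam * η (b + 1 + n) 0 := fun n => by
    have h := hE.qwalk_eq_mul_of_lt_or_lt (x := b + 1 + n) (by omega) 0
    rw [qwalk, Matrix.cons_val_zero, coin_eq_one_of_lt_or_lt hJC (by omega), one_mulVec] at h
    rw [← h]; push_cast; ring_nf
  have := eq_zero_of_bounded_of_succ_eq_mul (u := fun n : ℕ => η (b + 1 + n) 0) hlam hstep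
    (fun n => hB _ 0) (x - (b + 1)).toNat
  rwa [show b + 1 + ((x - (b + 1)).toNat : ℤ) = x by omega] at this

lemma right_eq_zero_of_lt (hE : ResolventEq C a b lam η ψ) (hJC : ∀ x : ℤ, C x ≠ 1 → a ≤ x ∧ x ≤ b)
    (hlam : 1 < ‖lam‖) {B : ℝ} (hB : ∀ x i, ‖η x i‖ ≤ B) {x : ℤ} (hx : x < a) : η x 1 = 0 := by
  have hstep : ∀ n : ℕ, η (a - 1 - (n + 1 : ℕ)) 1 = lam * η (a - 1 - n) 1 := fun n => by
    have h := hE.qwalk_eq_mul_of_lt_or_lt (x := a - 1 - n) (by omega) 1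
    rw [qwalk, Matrix.cons_val_one, Matrix.cons_val_zero, coin_eq_one_of_lt_or_lt hJC (by omega),
      one_mulVec] at h
    rw [← h]; push_cast; ring_nf
  have := eq_zero_of_bounded_of_succ_eq_mul (u := fun n : ℕ => η (a - 1 - n) 1) hlam hstep
    (fun n => hB _ 1) (a - 1 - x).toNat
  rwa [show a - 1 - ((a - 1 - x).toNat : ℤ) = x by omega] at this

lemma compression_sub_mulVec (hE : ResolventEq C a b lam η ψ)
    (hJC : ∀ x : ℤ, C x ≠ 1 → a ≤ x ∧ x ≤ b) (hlam : 1 < ‖lam‖) {B : ℝ}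
    (hB : ∀ x i, ‖η x i‖ ≤ B) :
    (compression a b C - lam • 1) *ᵥ restrict a b η = restrict a b ψ := by
  rw [sub_mulVec, smul_mulVec, one_mulVec, compression_mulVec,
    restrict_qwalk_extend_restrict hJC (fun _ => hE.left_eq_zero_of_lt hJC hlam hB)
      (fun _ => hE.right_eq_zero_of_lt hJC hlam hB)]
  funext ⟨⟨x, hx⟩, i⟩
  have h := hE x i
  rw [jind, if_pos (Finset.mem_Icc.mp hx), one_mul] at h
  exact h

end ResolventEq

section Hilbert

variable (a b : ℤ)

lemma norm_ev_le (ψ : H2) (x : ℤ) (i : Fin 2) : ‖ev ψ x i‖ ≤ ‖ψ‖ :=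
  (PiLp.norm_apply_le _ i).trans (lp.norm_apply_le_norm two_ne_zero ψ x)

lemma continuous_ev (x : ℤ) (i : Fin 2) : Continuous fun ψ : H2 => ev ψ x i :=
  (EuclideanSpace.proj i ∘L lp.evalCLM ℂ _ 2 x : H2 →L[ℂ] ℂ).continuous

def restrictL : H2 →L[ℂ] (Site a b → ℂ) :=
  ContinuousLinearMap.pi fun p => EuclideanSpace.proj p.2 ∘L lp.evalCLM ℂ _ 2 p.1.1

lemma memℓp_extend (v : Site a b → ℂ) :
    Memℓp (fun x => WithLp.toLp 2 (extend a b v x) : ∀ _ : ℤ, EuclideanSpace ℂ (Fin 2)) 2 :=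
  (memℓp_zero <| (Finset.Icc a b).finite_toSet.subset fun x hx => by
    by_contra h
    exact hx (by simp [extend_apply_of_notMem h])).of_exponent_ge zero_le

def extendL : (Site a b → ℂ) →L[ℂ] H2 :=
  LinearMap.toContinuousLinearMap
    { toFun v := ⟨_, memℓp_extend a b v⟩
      map_add' v w := by ext x i; simp; rfl
      map_smul' c v := by ext x i; simp }

lemma ev_extendL (v : Site a b → ℂ) : ev (extendL a b v) = extend a b v := rfl

def cutoff : Matrix (Site a b) (Site a b) ℂ →ₗ[ℂ] (H2 →L[ℂ] H2) where
  toFun A := extendL a b ∘L (toLin' A).toContinuousLinearMap ∘L restrictL a b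
  map_add' A B := by ext ψ : 1; simp
  map_smul' c A := by ext ψ : 1; simp

lemma ev_cutoff_apply (A : Matrix (Site a b) (Site a b) ℂ) (ψ : H2) :
    ev (cutoff a b A ψ) = extend a b (A *ᵥ restrict a b (ev ψ)) := rfl

end Hilbert

section CutoffResolvent

variable (C : ℤ → Matrix (Fin 2) (Fin 2) ℂ) (a b : ℤ)

/-- Agrees with `1_J (U - λ)⁻¹ 1_J` for `|λ| > 1`; at the finitely many `λ` where
`compression a b C - λ • 1` is singular, `⁻¹` returns the junk value `0`. -/
def cutoffResolvent (lam : ℂ) : H2 →L[ℂ] H2 := cutoff a b (compression a b C - lam • 1)⁻¹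

lemma analyticAt_compression_sub_smul_one_apply (p q : Site a b) (z : ℂ) :
    AnalyticAt ℂ (fun w => (compression a b C - w • 1) p q) z := by
  simp only [Matrix.sub_apply, Matrix.smul_apply, smul_eq_mul]
  exact analyticAt_const.sub (analyticAt_id.mul analyticAt_const)

lemma meromorphicOn_cutoffResolvent : MeromorphicOn (cutoffResolvent C a b) Set.univ :=
  fun z _ => meromorphicAt_linearMap_inv (cutoff a b)
    fun p q => analyticAt_compression_sub_smul_one_apply C a b p q z

variable {C a b}

lemma det_compression_sub_smul_one_ne_zero (hC : ∀ x, C x ∈ unitaryGroup (Fin 2) ℂ) {lam : ℂ}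
    (hlam : 1 < ‖lam‖) : (compression a b C - lam • 1).det ≠ 0 :=
  det_sub_smul_one_ne_zero_of_contraction (sum_enorm_sq_compression_mulVec_le hC) hlam

lemma ev_cutoffResolvent_of_resolventEq (hC : ∀ x, C x ∈ unitaryGroup (Fin 2) ℂ)
    (hJC : ∀ x : ℤ, C x ≠ 1 → a ≤ x ∧ x ≤ b) {lam : ℂ} (hlam : 1 < ‖lam‖) {ψ η : H2}
    (hE : ResolventEq C a b lam (ev η) (ev ψ)) (x : ℤ) (i : Fin 2) :
    ev (cutoffResolvent C a b lam ψ) x i = jind a b x * ev η x i := by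
  rw [cutoffResolvent, ev_cutoff_apply, ← hE.compression_sub_mulVec hJC hlam (norm_ev_le η),
    mulVec_mulVec, nonsing_inv_mul _ (det_compression_sub_smul_one_ne_zero hC hlam).isUnit,
    one_mulVec, extend_restrict]

lemma compression_apply_left_end (ha : a ∈ Finset.Icc a b) (q : Site a b) :
    compression a b C (⟨a, ha⟩, 1) q = 0 := by
  rw [compression, LinearMap.toMatrix'_apply]
  show (C (a - 1) *ᵥ extend a b (Pi.single q 1) (a - 1)) 1 = 0
  rw [extend_apply_of_notMem (by simp), mulVec_zero, Pi.zero_apply]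

lemma ev_cutoffResolvent_left_end (ha : a ∈ Finset.Icc a b) {z : ℂ}
    (hz : (compression a b C - z • 1).det ≠ 0) :
    ev (cutoffResolvent C a b z (extendL a b (Pi.single (⟨a, ha⟩, 1) 1))) a 1 = -z⁻¹ := by
  have h := mul_inv_sub_smul_one_apply_self_of_row_eq_zero (compression_apply_left_end ha) hz
  have hz0 : z ≠ 0 := by rintro rfl; simp at h
  rw [cutoffResolvent, ev_cutoff_apply, ev_extendL, restrict_extend, mulVec_single_one,
    extend_apply_of_mem ha, col_apply]
  field_simp
  linear_combination h

lemma eventually_det_compression_sub_smul_one_ne_zero (hC : ∀ x, C x ∈ unitaryGroup (Fin 2) ℂ) :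
    ∀ᶠ z in 𝓝[≠] (0 : ℂ), (compression a b C - z • 1).det ≠ 0 := by
  have han : AnalyticOnNhd ℂ (fun z => (compression a b C - z • 1).det) Set.univ :=
    fun z _ => analyticAt_det_of_entries fun p q =>
      analyticAt_compression_sub_smul_one_apply C a b p q z
  by_contra h
  rw [Filter.not_eventually] at h
  simp only [ne_eq, not_not] at h
  exact det_compression_sub_smul_one_ne_zero hC (lam := 2) (by norm_num)
    (han.eqOn_zero_of_preconnected_of_frequently_eq_zero isPreconnected_univ (Set.mem_univ 0) h
      (Set.mem_univ 2))

end CutoffResolvent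

end QuantumWalk

open QuantumWalk in
/-- Meromorphic continuation of the cut-off resolvent: there is a meromorphic family
F : ℂ → B(ℋ) with F(λ) = 1_J(U−λ)⁻¹1_J for |λ| > 1; if J ∩ ℤ ≠ ∅ then F has a pole at 0
(it does not extend analytically there). -/
theorem meromorphic_continuation_of_cutoff_resolvent
    (C : ℤ → Matrix (Fin 2) (Fin 2) ℂ) (hC : CoinAssumption C)
    (a b : ℤ) (hJC : ∀ x : ℤ, C x ≠ 1 → a ≤ x ∧ x ≤ b)
    (Uop : H2 →L[ℂ] H2)
    (hU : ∀ ψ : H2, ∀ x : ℤ, ∀ i : Fin 2,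
      ev (Uop ψ) x i = qwalk C (fun y => ev ψ y) x i) :
    ∃ F : ℂ → (H2 →L[ℂ] H2),
      MeromorphicOn F Set.univ ∧
      -- F(λ) = 1_J (U−λ)⁻¹ 1_J for |λ| > 1:
      -- whenever (U−λ)η = 1_J ψ, we have F(λ)ψ = 1_J η
      (∀ lam : ℂ, 1 < ‖lam‖ → ∀ ψ η : H2,
        (∀ x : ℤ, ∀ i : Fin 2, ev (Uop η) x i - lam * ev η x i = jind a b x * ev ψ x i) →
        ∀ x : ℤ, ∀ i : Fin 2, ev (F lam ψ) x i = jind a b x * ev η x i) ∧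
      -- pole at λ = 0 whenever J ∩ ℤ ≠ ∅
      (a ≤ b →
        ¬ ∃ G : ℂ → (H2 →L[ℂ] H2), AnalyticAt ℂ G 0 ∧
          ∀ᶠ z in nhdsWithin 0 {(0 : ℂ)}ᶜ, G z = F z) := by
  refine ⟨cutoffResolvent C a b, meromorphicOn_cutoffResolvent C a b, ?_, ?_⟩
  · intro lam hlam ψ η hη
    refine ev_cutoffResolvent_of_resolventEq hC.unitary hJC hlam fun x i => ?_
    rw [← hU η x i]
    exact hη x i
  · rintro hab ⟨G, hG, hGF⟩
    have ha : a ∈ Finset.Icc a b := Finset.mem_Icc.mpr ⟨le_rfl, hab⟩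
    set ψ₀ := extendL a b (Pi.single (⟨a, ha⟩, 1) 1)
    have hcont : ContinuousAt (fun z => ev (G z ψ₀) a 1) 0 :=
      ((continuous_ev a 1).comp (ContinuousLinearMap.apply ℂ H2 ψ₀).continuous).continuousAt.comp
        hG.continuousAt
    refine not_eventuallyEq_neg_inv_of_continuousAt hcont ?_
    filter_upwards [hGF, eventually_det_compression_sub_smul_one_ne_zero hC.unitary] with z hGz hz
    rw [hGz, ev_cutoffResolvent_left_end ha hz]
end
end

section
/- (Resonance expansion.) Let C : ℤ → U(2) satisfy the standing Assumption and let U = S∘C. Let ψ : ℤ → ℂ² be compactly supported and let J be a bounded interval with J ⊇ supp ψ ∪ chs(C−I₂). Then there exist: a finite set Λ ⊂ ℂ∖{0}; for each λ ∈ Λ a positive integer m(λ) and maps φ_{λ,1}, …, φ_{λ,m(λ)} : ℤ → ℂ², each outgoing with N₁(supp♭ φ_{λ,k}) ⊆ chs(C−I₂), satisfying (U−λ)φ_{λ,k} = φ_{λ,k−1} for 1 ≤ k ≤ m(λ) (with the convention φ_{λ,0} = 0); complex coefficients c_{λ,k}; and a map φ₀ : ℤ → ℂ² supported in J with U^n φ₀(x)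 = 0 for all x ∈ J ∩ ℤ whenever n > 2|J|_ℤ, such that (i) ψ = 1_J Σ_{λ∈Λ} Σ_{k=1}^{m(λ)} c_{λ,k} φ_{λ,k} + φ₀, and (ii) for every n > 2|J|_ℤ and every x ∈ N_{n−1−2|J|_ℤ}(J) ∩ ℤ, U^n ψ(x) = Σ_{λ∈Λ} λ^n Σ_{k=1}^{m(λ)} c_{λ,k} Σ_{l=0}^{k−1} binom(n,l) λ^{−l} φ_{λ,k−l}(x). -/
noncomputable section

open scoped ComplexConjugate

namespace QWaux

variable (C : ℤ → Matrix (Fin 2) (Fin 2) ℂ) (a b : ℤ)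

lemma qwalk0 (ψ : QWState) (x : ℤ) : qwalk C ψ x 0 = (C (x+1)).mulVec (ψ (x+1)) 0 := rfl
lemma qwalk1 (ψ : QWState) (x : ℤ) : qwalk C ψ x 1 = (C (x-1)).mulVec (ψ (x-1)) 1 := rfl

def Ulin : QWState →ₗ[ℂ] QWState where
  toFun := qwalk C
  map_add' ψ ζ := by
    funext x i
    fin_cases i
    · show qwalk C (ψ + ζ) x 0 = qwalk C ψ x 0 + qwalk C ζ x 0
      rw [qwalk0, qwalk0, qwalk0]
      show (C (x+1)).mulVec (ψ (x+1) + ζ (x+1)) 0 = _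
      rw [Matrix.mulVec_add]; rfl
    · show qwalk C (ψ + ζ) x 1 = qwalk C ψ x 1 + qwalk C ζ x 1
      rw [qwalk1, qwalk1, qwalk1]
      show (C (x-1)).mulVec (ψ (x-1) + ζ (x-1)) 1 = _
      rw [Matrix.mulVec_add]; rfl
  map_smul' c ψ := by
    funext x i
    fin_cases i
    · show qwalk C (c • ψ) x 0 = c • qwalk C ψ x 0
      rw [qwalk0, qwalk0]
      show (C (x+1)).mulVec (c • ψ (x+1)) 0 = _
      rw [Matrix.mulVec_smul]; rfl
    · show qwalk C (c • ψ) x 1 = c • qwalk C ψ x 1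
      rw [qwalk1, qwalk1]
      show (C (x-1)).mulVec (c • ψ (x-1)) 1 = _
      rw [Matrix.mulVec_smul]; rfl

@[simp] lemma Ulin_apply (ψ : QWState) : Ulin C ψ = qwalk C ψ := rfl

abbrev Vs := (↑(Finset.Icc a b) : Type) → Fin 2 → ℂ

def Emap : Vs a b →ₗ[ℂ] QWState where
  toFun v := fun x i => if h : a ≤ x ∧ x ≤ b then v ⟨x, Finset.mem_Icc.mpr h⟩ i else 0
  map_add' v w := by
    funext x i
    simp only [Pi.add_apply]
    by_cases h : a ≤ x ∧ x ≤ b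
    · simp only [dif_pos h]
    · simp only [dif_neg h, add_zero]
  map_smul' c v := by
    funext x i
    simp only [Pi.smul_apply, RingHom.id_apply, smul_eq_mul]
    by_cases h : a ≤ x ∧ x ≤ b
    · simp only [dif_pos h]
    · simp only [dif_neg h, mul_zero]

lemma Emap_mem (v : Vs a b) {x : ℤ} (h : a ≤ x ∧ x ≤ b) (i : Fin 2) :
    Emap a b v x i = v ⟨x, Finset.mem_Icc.mpr h⟩ i := dif_pos h

lemma Emap_not_mem (v : Vs a b) {x : ℤ} (h : ¬(a ≤ x ∧ x ≤ b)) (i : Fin 2) :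
    Emap a b v x i = 0 := dif_neg h

def Rmap : QWState →ₗ[ℂ] Vs a b where
  toFun ψ := fun p i => ψ p.1 i
  map_add' _ _ := rfl
  map_smul' _ _ := rfl

@[simp] lemma Rmap_apply (ψ : QWState) (p : ↑(Finset.Icc a b)) (i : Fin 2) :
    Rmap a b ψ p i = ψ p.1 i := rfl

lemma Rmap_Emap (v : Vs a b) : Rmap a b (Emap a b v) = v := by
  funext p i
  have hp : a ≤ (p : ℤ) ∧ (p : ℤ) ≤ b := Finset.mem_Icc.mp p.2
  show Emap a b v p.1 i = v p i
  rw [Emap_mem a b v hp]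

def Mop : Module.End ℂ (Vs a b) := Rmap a b ∘ₗ Ulin C ∘ₗ Emap a b

lemma Mop_apply (w : Vs a b) (p : ↑(Finset.Icc a b)) (i : Fin 2) :
    Mop C a b w p i = qwalk C (Emap a b w) p.1 i := rfl

/-- escaped states at distance `d`. -/
def EscD (d : ℕ) (ζ : QWState) : Prop :=
  ∀ x : ℤ, (ζ x 0 ≠ 0 → x + (d : ℤ) ≤ a - 1) ∧ (ζ x 1 ≠ 0 → b + 1 + (d : ℤ) ≤ x)

lemma escD_mono {d e : ℕ} {ζ : QWState} (h : EscD a b e ζ) (hde : d ≤ e) : EscD a b d ζ := by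
  intro x
  refine ⟨fun h0 => ?_, fun h1 => ?_⟩
  · have := (h x).1 h0; omega
  · have := (h x).2 h1; omega

lemma escD_zero_on {d : ℕ} {ζ : QWState} (h : EscD a b d ζ) {x : ℤ}
    (hx : a - (d : ℤ) ≤ x) (hx' : x ≤ b + (d : ℤ)) (i : Fin 2) : ζ x i = 0 := by
  fin_cases i
  · by_contra h0; have := (h x).1 h0; omega
  · by_contra h1; have := (h x).2 h1; omega

lemma vec_eq_zero {u : Fin 2 → ℂ} (h0 : u 0 = 0) (h1 : u 1 = 0) : u = 0 := by
  funext i; fin_cases i <;> assumption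

lemma escD_step (hC1 : ∀ x : ℤ, ¬(a ≤ x ∧ x ≤ b) → C x = 1)
    {d : ℕ} {ζ : QWState} (h : EscD a b d ζ) :
    EscD a b (d+1) (qwalk C ζ) := by
  intro x
  constructor
  · intro h0
    rw [qwalk0] at h0
    by_cases hL : ζ (x+1) 0 ≠ 0
    · have := (h (x+1)).1 hL; push_cast; omega
    · push_neg at hL
      by_cases hR : ζ (x+1) 1 ≠ 0
      · have hx1 : b + 1 + (d:ℤ) ≤ x + 1 := (h (x+1)).2 hR
        rw [hC1 (x+1) (by omega), Matrix.one_mulVec] at h0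
        exact absurd hL h0
      · push_neg at hR
        rw [vec_eq_zero hL hR, Matrix.mulVec_zero] at h0
        exact absurd rfl h0
  · intro h1
    rw [qwalk1] at h1
    by_cases hR : ζ (x-1) 1 ≠ 0
    · have := (h (x-1)).2 hR; push_cast; omega
    · push_neg at hR
      by_cases hL : ζ (x-1) 0 ≠ 0
      · have hx1 : x - 1 + (d:ℤ) ≤ a - 1 := (h (x-1)).1 hL
        rw [hC1 (x-1) (by omega), Matrix.one_mulVec] at h1
        exact absurd hR h1
      · push_neg at hL
        rw [vec_eq_zero hL hR, Matrix.mulVec_zero] at h1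
        exact absurd rfl h1

lemma escD_iter (hC1 : ∀ x : ℤ, ¬(a ≤ x ∧ x ≤ b) → C x = 1)
    {d : ℕ} {ζ : QWState} (h : EscD a b d ζ) (m : ℕ) :
    EscD a b (d + m) ((qwalk C)^[m] ζ) := by
  induction m with
  | zero => simpa using h
  | succ m ih =>
      rw [Function.iterate_succ_apply']
      have := escD_step C a b hC1 ih
      exact escD_mono a b this (by omega)

lemma escD_sub (hC1 : ∀ x : ℤ, ¬(a ≤ x ∧ x ≤ b) → C x = 1) (w : Vs a b) :
    EscD a b 0 (fun x i => qwalk C (Emap a b w) x i - Emap a b (Mop C a b w) x i) := by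
  intro x
  by_cases h : a ≤ x ∧ x ≤ b
  · have hmem : ∀ i : Fin 2, Emap a b (Mop C a b w) x i = qwalk C (Emap a b w) x i := by
      intro i
      rw [Emap_mem a b _ h]
      rfl
    refine ⟨fun hne => ?_, fun hne => ?_⟩ <;> dsimp only at hne
    · rw [hmem 0] at hne; exact absurd (sub_self _) hne
    · rw [hmem 1] at hne; exact absurd (sub_self _) hne
  · have hz : ∀ i, Emap a b (Mop C a b w) x i = 0 := fun i => Emap_not_mem a b _ h i
    refine ⟨fun hne => ?_, fun hne => ?_⟩ <;> dsimp only at hne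
    · rw [hz 0, sub_zero, qwalk0] at hne
      have hv : Emap a b w (x+1) ≠ 0 := by
        intro h0; rw [h0, Matrix.mulVec_zero] at hne; exact hne rfl
      have hx1 : a ≤ x + 1 ∧ x + 1 ≤ b := by
        by_contra hcon
        exact hv (vec_eq_zero (Emap_not_mem a b w hcon 0) (Emap_not_mem a b w hcon 1))
      push_cast; omega
    · rw [hz 1, sub_zero, qwalk1] at hne
      have hv : Emap a b w (x-1) ≠ 0 := by
        intro h0; rw [h0, Matrix.mulVec_zero] at hne; exact hne rfl
      have hx1 : a ≤ x - 1 ∧ x - 1 ≤ b := by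
        by_contra hcon
        exact hv (vec_eq_zero (Emap_not_mem a b w hcon 0) (Emap_not_mem a b w hcon 1))
      push_cast; omega

lemma escD_add {d : ℕ} {ζ η : QWState} (hζ : EscD a b d ζ) (hη : EscD a b d η) :
    EscD a b d (fun x i => ζ x i + η x i) := by
  intro x
  refine ⟨fun hne => ?_, fun hne => ?_⟩ <;> dsimp only at hne
  · rcases ne_or_eq (ζ x 0) 0 with h | h
    · exact (hζ x).1 h
    · exact (hη x).1 (by intro h'; rw [h, h', add_zero] at hne; exact hne rfl)
  · rcases ne_or_eq (ζ x 1) 0 with h | h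
    · exact (hζ x).2 h
    · exact (hη x).2 (by intro h'; rw [h, h', add_zero] at hne; exact hne rfl)

lemma evolA (hC1 : ∀ x : ℤ, ¬(a ≤ x ∧ x ≤ b) → C x = 1) (ζ : QWState)
    (hs : ∀ x : ℤ, ¬(a ≤ x ∧ x ≤ b) → ∀ i : Fin 2, ζ x i = 0) (n : ℕ) :
    ∃ e : QWState, EscD a b 0 e ∧
      (qwalk C)^[n] ζ = fun x i => Emap a b ((Mop C a b ^ n) (Rmap a b ζ)) x i + e x i := by
  induction n with
  | zero =>
      refine ⟨fun _ _ => 0, fun x => ⟨fun h => absurd rfl h, fun h => absurd rfl h⟩, ?_⟩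
      funext x i
      simp only [Function.iterate_zero_apply, pow_zero, Module.End.one_apply, add_zero]
      by_cases h : a ≤ x ∧ x ≤ b
      · rw [Emap_mem a b _ h]; rfl
      · rw [Emap_not_mem a b _ h]; exact hs x h i
  | succ n ih =>
      obtain ⟨e, he, heq⟩ := ih
      set w := (Mop C a b ^ n) (Rmap a b ζ) with hw
      refine ⟨fun x i => (qwalk C (Emap a b w) x i - Emap a b (Mop C a b w) x i) + qwalk C e x i,
        escD_add a b (escD_sub C a b hC1 w) (escD_mono a b (escD_step C a b hC1 he) (by omega)), ?_⟩
      funext x i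
      rw [Function.iterate_succ_apply', heq]
      have hsplit : (fun x i => Emap a b w x i + e x i) = Emap a b w + e := rfl
      rw [hsplit]
      have : qwalk C (Emap a b w + e) = qwalk C (Emap a b w) + qwalk C e := by
        have := (Ulin C).map_add (Emap a b w) e
        simpa using this
      rw [this]
      have hMw : (Mop C a b ^ (n+1)) (Rmap a b ζ) = Mop C a b w := by
        rw [hw, ← Module.End.mul_apply, ← pow_succ']
      rw [hMw]
      show qwalk C (Emap a b w) x i + qwalk C e x i = _
      ring

lemma transient (hC1 : ∀ x : ℤ, ¬(a ≤ x ∧ x ≤ b) → C x = 1) (ζ : QWState)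
    (hs : ∀ x : ℤ, ¬(a ≤ x ∧ x ≤ b) → ∀ i : Fin 2, ζ x i = 0) {j n : ℕ} (hj : j ≤ n)
    (h0 : (Mop C a b ^ j) (Rmap a b ζ) = 0) :
    EscD a b (n - j) ((qwalk C)^[n] ζ) := by
  obtain ⟨e, he, heq⟩ := evolA C a b hC1 ζ hs j
  have hζj : (qwalk C)^[j] ζ = e := by
    rw [heq]; funext x i; rw [h0]
    simp only [map_zero]
    show (0 : Fin 2 → ℂ) i + e x i = e x i
    rw [Pi.zero_apply, zero_add]
  have : (qwalk C)^[n] ζ = (qwalk C)^[n - j] ((qwalk C)^[j] ζ) := by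
    rw [← Function.iterate_add_apply]
    congr 1
    omega
  rw [this, hζj]
  have := escD_iter C a b hC1 he (n - j)
  simpa using this


def rSeq (lam : ℂ) (φ' : QWState) (w : Vs a b) : ℕ → ℂ
  | 0 => lam⁻¹ * ((C b).mulVec (Emap a b w b) 1 - φ' (b+1) 1)
  | (n+1) => lam⁻¹ * (rSeq lam φ' w n - φ' (b+2+(n:ℤ)) 1)

def lSeq (lam : ℂ) (φ' : QWState) (w : Vs a b) : ℕ → ℂ
  | 0 => lam⁻¹ * ((C a).mulVec (Emap a b w a) 0 - φ' (a-1) 0)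
  | (n+1) => lam⁻¹ * (lSeq lam φ' w n - φ' (a-2-(n:ℤ)) 0)

def buildExt (lam : ℂ) (φ' : QWState) (w : Vs a b) : QWState := fun x =>
  if b < x then ![0, rSeq C a b lam φ' w (x - (b+1)).toNat]
  else if x < a then ![lSeq C a b lam φ' w (a - 1 - x).toNat, 0]
  else Emap a b w x

variable (lam : ℂ) (φ' : QWState) (w : Vs a b)

lemma buildExt_right0 {x : ℤ} (hx : b < x) : buildExt C a b lam φ' w x 0 = 0 := by
  simp [buildExt, hx]

lemma buildExt_right1 {x : ℤ} (hx : b < x) :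
    buildExt C a b lam φ' w x 1 = rSeq C a b lam φ' w (x - (b+1)).toNat := by
  simp [buildExt, hx]

lemma buildExt_left0 {x : ℤ} (hab : a ≤ b) (hx : x < a) :
    buildExt C a b lam φ' w x 0 = lSeq C a b lam φ' w (a - 1 - x).toNat := by
  have h1 : ¬ b < x := by omega
  simp [buildExt, h1, hx]

lemma buildExt_left1 {x : ℤ} (hab : a ≤ b) (hx : x < a) :
    buildExt C a b lam φ' w x 1 = 0 := by
  have h1 : ¬ b < x := by omega
  simp [buildExt, h1, hx]

lemma buildExt_mid {x : ℤ} (hx : a ≤ x ∧ x ≤ b) :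
    buildExt C a b lam φ' w x = Emap a b w x := by
  have h1 : ¬ b < x := by omega
  have h2 : ¬ x < a := by omega
  simp [buildExt, h1, h2]

lemma buildExt_chainRel (hab : a ≤ b) (hlam : lam ≠ 0)
    (hC1 : ∀ x : ℤ, ¬(a ≤ x ∧ x ≤ b) → C x = 1)
    (w' : Vs a b)
    (hM : Mop C a b w = lam • w + w')
    (hφ'0 : ∀ x : ℤ, b < x → φ' x 0 = 0)
    (hφ'1 : ∀ x : ℤ, x < a → φ' x 1 = 0)
    (hφ'J : ∀ x : ℤ, (a ≤ x ∧ x ≤ b) → ∀ i : Fin 2, φ' x i = Emap a b w' x i) :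
    ∀ x : ℤ, ∀ i : Fin 2, qwalk C (buildExt C a b lam φ' w) x i =
      lam * buildExt C a b lam φ' w x i + φ' x i := by
  have hmid : ∀ x : ℤ, (a ≤ x ∧ x ≤ b) → ∀ i : Fin 2,
      qwalk C (buildExt C a b lam φ' w) x i = lam * buildExt C a b lam φ' w x i + φ' x i := by
    intro x hx i
    have hq0 : qwalk C (buildExt C a b lam φ' w) x 0 = qwalk C (Emap a b w) x 0 := by
      rw [qwalk0, qwalk0]
      by_cases hxb : x + 1 ≤ b
      · rw [buildExt_mid C a b lam φ' w ⟨by omega, hxb⟩]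
      · rw [hC1 (x+1) (by omega), Matrix.one_mulVec, Matrix.one_mulVec,
          buildExt_right0 C a b lam φ' w (by omega : b < x + 1), Emap_not_mem a b w (by omega)]
    have hq1 : qwalk C (buildExt C a b lam φ' w) x 1 = qwalk C (Emap a b w) x 1 := by
      rw [qwalk1, qwalk1]
      by_cases hxa : a ≤ x - 1
      · rw [buildExt_mid C a b lam φ' w ⟨hxa, by omega⟩]
      · rw [hC1 (x-1) (by omega), Matrix.one_mulVec, Matrix.one_mulVec,
          buildExt_left1 C a b lam φ' w hab (by omega : x - 1 < a), Emap_not_mem a b w (by omega)]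
    have hq : qwalk C (buildExt C a b lam φ' w) x i = qwalk C (Emap a b w) x i := by
      fin_cases i
      · exact hq0
      · exact hq1
    rw [hq]
    have hMx : qwalk C (Emap a b w) x i = Mop C a b w ⟨x, Finset.mem_Icc.mpr hx⟩ i := rfl
    rw [hMx, hM]
    have hφx : buildExt C a b lam φ' w x i = Emap a b w x i := by
      rw [buildExt_mid C a b lam φ' w hx]
    rw [hφx, Emap_mem a b w hx, hφ'J x hx i, Emap_mem a b w' hx]
    rfl
  intro x i
  fin_cases i
  · -- component 0
    show qwalk C (buildExt C a b lam φ' w) x 0 = lam * buildExt C a b lam φ' w x 0 + φ' x 0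
    by_cases hxb : b < x
    · rw [qwalk0, hC1 (x+1) (by omega), Matrix.one_mulVec,
        buildExt_right0 C a b lam φ' w (by omega : b < x + 1),
        buildExt_right0 C a b lam φ' w hxb, hφ'0 x hxb]
      ring
    · by_cases hxa : x < a
      · by_cases hx1 : x + 1 = a
        · rw [qwalk0, hx1, buildExt_mid C a b lam φ' w ⟨le_refl a, hab⟩,
            buildExt_left0 C a b lam φ' w hab hxa]
          have h0 : (a - 1 - x).toNat = 0 := by omega
          rw [h0]
          show (C a).mulVec (Emap a b w a) 0 =
            lam * (lam⁻¹ * ((C a).mulVec (Emap a b w a) 0 - φ' (a-1) 0)) + φ' x 0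
          have hxe : x = a - 1 := by omega
          rw [hxe, ← mul_assoc, mul_inv_cancel₀ hlam, one_mul, sub_add_cancel]
        · -- x + 1 < a
          set n : ℕ := (a - 2 - x).toNat with hn
          have hnz : (n : ℤ) = a - 2 - x := by omega
          rw [qwalk0, hC1 (x+1) (by omega), Matrix.one_mulVec,
            buildExt_left0 C a b lam φ' w hab (by omega : x + 1 < a),
            buildExt_left0 C a b lam φ' w hab hxa]
          have h1 : (a - 1 - (x+1)).toNat = n := by omega
          have h2 : (a - 1 - x).toNat = n + 1 := by omega
          rw [h1, h2]
          show lSeq C a b lam φ' w n =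
            lam * (lam⁻¹ * (lSeq C a b lam φ' w n - φ' (a-2-(n:ℤ)) 0)) + φ' x 0
          have h3 : a - 2 - (n:ℤ) = x := by omega
          rw [h3, ← mul_assoc, mul_inv_cancel₀ hlam, one_mul, sub_add_cancel]
      · exact hmid x ⟨by omega, by omega⟩ 0
  · -- component 1
    show qwalk C (buildExt C a b lam φ' w) x 1 = lam * buildExt C a b lam φ' w x 1 + φ' x 1
    by_cases hxa : x < a
    · rw [qwalk1, hC1 (x-1) (by omega), Matrix.one_mulVec,
        buildExt_left1 C a b lam φ' w hab (by omega : x - 1 < a),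
        buildExt_left1 C a b lam φ' w hab hxa, hφ'1 x hxa]
      ring
    · by_cases hxb : b < x
      · by_cases hx1 : x - 1 = b
        · rw [qwalk1, hx1, buildExt_mid C a b lam φ' w ⟨hab, le_refl b⟩,
            buildExt_right1 C a b lam φ' w hxb]
          have h0 : (x - (b+1)).toNat = 0 := by omega
          rw [h0]
          show (C b).mulVec (Emap a b w b) 1 =
            lam * (lam⁻¹ * ((C b).mulVec (Emap a b w b) 1 - φ' (b+1) 1)) + φ' x 1
          have hxe : x = b + 1 := by omega
          rw [hxe, ← mul_assoc, mul_inv_cancel₀ hlam, one_mul, sub_add_cancel]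
        · -- x - 1 > b
          set n : ℕ := (x - (b+2)).toNat with hn
          have hnz : (n : ℤ) = x - (b+2) := by omega
          rw [qwalk1, hC1 (x-1) (by omega), Matrix.one_mulVec,
            buildExt_right1 C a b lam φ' w (by omega : b < x - 1),
            buildExt_right1 C a b lam φ' w hxb]
          have h1 : (x - 1 - (b+1)).toNat = n := by omega
          have h2 : (x - (b+1)).toNat = n + 1 := by omega
          rw [h1, h2]
          show rSeq C a b lam φ' w n =
            lam * (lam⁻¹ * (rSeq C a b lam φ' w n - φ' (b+2+(n:ℤ)) 1)) + φ' x 1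
          have h3 : b + 2 + (n:ℤ) = x := by omega
          rw [h3, ← mul_assoc, mul_inv_cancel₀ hlam, one_mul, sub_add_cancel]
      · exact hmid x ⟨by omega, by omega⟩ 1


def wvec (lam : ℂ) (v : Vs a b) (D k : ℕ) : Vs a b :=
  ((Mop C a b - lam • (1 : Module.End ℂ (Vs a b))) ^ (D - k)) v

def phichain (lam : ℂ) (v : Vs a b) (D : ℕ) : ℕ → QWState
  | 0 => 0
  | (k+1) => buildExt C a b lam (phichain lam v D k) (wvec C a b lam v D (k+1))

variable (lam : ℂ) (v : Vs a b) (D : ℕ)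

lemma phichain_shape0 : ∀ k : ℕ, ∀ x : ℤ, b < x → phichain C a b lam v D k x 0 = 0 := by
  intro k x hx
  cases k with
  | zero => rfl
  | succ k => exact buildExt_right0 C a b lam _ _ hx

lemma phichain_shape1 (hab : a ≤ b) :
    ∀ k : ℕ, ∀ x : ℤ, x < a → phichain C a b lam v D k x 1 = 0 := by
  intro k x hx
  cases k with
  | zero => rfl
  | succ k => exact buildExt_left1 C a b lam _ _ hab hx

lemma phichain_J (hv : ((Mop C a b - lam • (1 : Module.End ℂ (Vs a b))) ^ D) v = 0) :
    ∀ k : ℕ, ∀ x : ℤ, (a ≤ x ∧ x ≤ b) → ∀ i : Fin 2,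
      phichain C a b lam v D k x i = Emap a b (wvec C a b lam v D k) x i := by
  intro k x hx i
  cases k with
  | zero =>
      show (0 : ℂ) = _
      have h0 : wvec C a b lam v D 0 = 0 := by
        simp only [wvec, Nat.sub_zero]; exact hv
      rw [h0, map_zero]
      rfl
  | succ k =>
      show buildExt C a b lam _ _ x i = _
      rw [buildExt_mid]
      exact hx

lemma phichain_rel (hab : a ≤ b) (hlam : lam ≠ 0)
    (hC1 : ∀ x : ℤ, ¬(a ≤ x ∧ x ≤ b) → C x = 1)
    (hv : ((Mop C a b - lam • (1 : Module.End ℂ (Vs a b))) ^ D) v = 0) :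
    ∀ k : ℕ, k ≤ D → ∀ x : ℤ, ∀ i : Fin 2,
      qwalk C (phichain C a b lam v D k) x i =
        lam * phichain C a b lam v D k x i + phichain C a b lam v D (k - 1) x i := by
  intro k hk x i
  cases k with
  | zero =>
      have h0 : ∀ y : ℤ, phichain C a b lam v D 0 y = 0 := fun _ => rfl
      fin_cases i
      · show qwalk C (phichain C a b lam v D 0) x 0 = lam * (0:ℂ) + (0:ℂ)
        rw [qwalk0, h0, Matrix.mulVec_zero]
        show (0:ℂ) = _
        ring
      · show qwalk C (phichain C a b lam v D 0) x 1 = lam * (0:ℂ) + (0:ℂ)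
        rw [qwalk1, h0, Matrix.mulVec_zero]
        show (0:ℂ) = _
        ring
  | succ k =>
      have hM : Mop C a b (wvec C a b lam v D (k+1)) =
          lam • wvec C a b lam v D (k+1) + wvec C a b lam v D k := by
        have hpow : wvec C a b lam v D k =
            (Mop C a b - lam • (1 : Module.End ℂ (Vs a b))) (wvec C a b lam v D (k+1)) := by
          have he : D - k = D - (k+1) + 1 := by omega
          rw [wvec, wvec, he, pow_succ', Module.End.mul_apply]
        rw [hpow]
        simp only [LinearMap.sub_apply, LinearMap.smul_apply, Module.End.one_apply]
        abel
      have := buildExt_chainRel C a b lam (phichain C a b lam v D k)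
        (wvec C a b lam v D (k+1)) hab hlam hC1 (wvec C a b lam v D k) hM
        (fun x hx => phichain_shape0 C a b lam v D k x hx)
        (fun x hx => phichain_shape1 C a b lam v D hab k x hx)
        (fun x hx i => phichain_J C a b lam v D hv k x hx i)
      exact this x i


lemma phichain_vanish0 (hab : a ≤ b) (hlam : lam ≠ 0)
    (hC1 : ∀ x : ℤ, ¬(a ≤ x ∧ x ≤ b) → C x = 1)
    (hv : ((Mop C a b - lam • (1 : Module.End ℂ (Vs a b))) ^ D) v = 0) :
    ∀ k : ℕ, k ≤ D → ∀ y : ℤ, (∀ z : ℤ, y + 1 ≤ z → C z = 1) →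
      phichain C a b lam v D k y 0 = 0 := by
  intro k
  induction k with
  | zero => intro _ y _; rfl
  | succ k ih =>
      intro hk1
      have key : ∀ n : ℕ, ∀ y : ℤ, b + 1 - (n:ℤ) ≤ y → (∀ z : ℤ, y + 1 ≤ z → C z = 1) →
          phichain C a b lam v D (k+1) y 0 = 0 := by
        intro n
        induction n with
        | zero => intro y hy _; exact phichain_shape0 C a b lam v D (k+1) y (by omega)
        | succ n ihn =>
            intro y hy hc
            by_cases hcase : b + 1 - (n:ℤ) ≤ y
            · exact ihn y hcase hc
            · have hrel := phichain_rel C a b lam v D hab hlam hC1 hv (k+1) hk1 y 0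
              rw [qwalk0, hc (y+1) (by omega), Matrix.one_mulVec] at hrel
              have h1 : phichain C a b lam v D (k+1) (y+1) 0 = 0 :=
                ihn (y+1) (by omega) (fun z hz => hc z (by omega))
              have h2 : phichain C a b lam v D k y 0 = 0 := ih (by omega) y hc
              rw [h1] at hrel
              have h3 : phichain C a b lam v D (k + 1 - 1) y 0 = phichain C a b lam v D k y 0 := rfl
              rw [h3, h2, add_zero] at hrel
              have := hrel.symm
              rcases mul_eq_zero.mp this with h | h
              · exact absurd h hlam
              · exact h
      intro y hc
      exact key (b + 1 - y).toNat y (by omega) hc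

lemma phichain_vanish1 (hab : a ≤ b) (hlam : lam ≠ 0)
    (hC1 : ∀ x : ℤ, ¬(a ≤ x ∧ x ≤ b) → C x = 1)
    (hv : ((Mop C a b - lam • (1 : Module.End ℂ (Vs a b))) ^ D) v = 0) :
    ∀ k : ℕ, k ≤ D → ∀ y : ℤ, (∀ z : ℤ, z ≤ y - 1 → C z = 1) →
      phichain C a b lam v D k y 1 = 0 := by
  intro k
  induction k with
  | zero => intro _ y _; rfl
  | succ k ih =>
      intro hk1
      have key : ∀ n : ℕ, ∀ y : ℤ, y ≤ a - 1 + (n:ℤ) → (∀ z : ℤ, z ≤ y - 1 → C z = 1) →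
          phichain C a b lam v D (k+1) y 1 = 0 := by
        intro n
        induction n with
        | zero => intro y hy _; exact phichain_shape1 C a b lam v D hab (k+1) y (by omega)
        | succ n ihn =>
            intro y hy hc
            by_cases hcase : y ≤ a - 1 + (n:ℤ)
            · exact ihn y hcase hc
            · have hrel := phichain_rel C a b lam v D hab hlam hC1 hv (k+1) hk1 y 1
              rw [qwalk1, hc (y-1) (by omega), Matrix.one_mulVec] at hrel
              have h1 : phichain C a b lam v D (k+1) (y-1) 1 = 0 :=
                ihn (y-1) (by omega) (fun z hz => hc z (by omega))
              have h2 : phichain C a b lam v D k y 1 = 0 := ih (by omega) y hc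
              rw [h1] at hrel
              have h3 : phichain C a b lam v D (k + 1 - 1) y 1 = phichain C a b lam v D k y 1 := rfl
              rw [h3, h2, add_zero] at hrel
              rcases mul_eq_zero.mp hrel.symm with h | h
              · exact absurd h hlam
              · exact h
      intro y hc
      exact key (y - (a - 1)).toNat y (by omega) hc

lemma phichain_outgoing (hab : a ≤ b) :
    ∀ k : ℕ, ∃ r : ℤ, 0 < r ∧ ∀ x : ℤ, r < x →
      phichain C a b lam v D k x 0 = 0 ∧ phichain C a b lam v D k (-x) 1 = 0 := by
  intro k
  refine ⟨|a| + |b| + 1, by positivity, fun x hx => ?_⟩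
  have h1 : b ≤ |b| := le_abs_self b
  have h2 : -|a| ≤ a := neg_abs_le a
  have h3 : 0 ≤ |a| := abs_nonneg a
  have h4 : 0 ≤ |b| := abs_nonneg b
  exact ⟨phichain_shape0 C a b lam v D k x (by omega),
    phichain_shape1 C a b lam v D hab k (-x) (by omega)⟩

lemma phichain_evol (hab : a ≤ b) (hlam : lam ≠ 0)
    (hC1 : ∀ x : ℤ, ¬(a ≤ x ∧ x ≤ b) → C x = 1)
    (hv : ((Mop C a b - lam • (1 : Module.End ℂ (Vs a b))) ^ D) v = 0) :
    ∀ n k : ℕ, k ≤ D → ∀ x : ℤ, ∀ i : Fin 2,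
      (qwalk C)^[n] (phichain C a b lam v D k) x i =
        ∑ m ∈ Finset.range (n+1),
          lam ^ m * (n.choose m : ℂ) * phichain C a b lam v D (k - (n - m)) x i := by
  have hNchain : ∀ k : ℕ, k ≤ D →
      (Ulin C - lam • (1 : Module.End ℂ QWState)) (phichain C a b lam v D k) =
        phichain C a b lam v D (k - 1) := by
    intro k hk
    funext x i
    simp only [LinearMap.sub_apply, LinearMap.smul_apply, Module.End.one_apply, Pi.sub_apply,
      Pi.smul_apply, smul_eq_mul, Ulin_apply]
    rw [phichain_rel C a b lam v D hab hlam hC1 hv k hk x i]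
    ring
  set N := Ulin C - lam • (1 : Module.End ℂ QWState) with hN
  have hNl : ∀ l k : ℕ, k ≤ D → (N ^ l) (phichain C a b lam v D k) =
      phichain C a b lam v D (k - l) := by
    intro l
    induction l with
    | zero => intro k _; rfl
    | succ l ihl =>
        intro k hk
        rw [pow_succ, Module.End.mul_apply, hNchain k hk, ihl (k-1) (by omega)]
        have he : k - 1 - l = k - (l + 1) := by omega
        rw [he]
  have hcomm : Commute (lam • (1 : Module.End ℂ QWState)) N :=
    (Commute.one_left N).smul_left lam
  have hU : Ulin C = lam • (1 : Module.End ℂ QWState) + N := by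
    rw [hN, add_sub_cancel]
  intro n k hk x i
  have hiter : (qwalk C)^[n] (phichain C a b lam v D k) =
      (Ulin C ^ n) (phichain C a b lam v D k) := by
    have hcoe : ⇑(Ulin C) = qwalk C := rfl
    rw [Module.End.pow_apply, hcoe]
  rw [hiter, hU, hcomm.add_pow, LinearMap.sum_apply, Finset.sum_apply, Finset.sum_apply]
  refine Finset.sum_congr rfl (fun m hm => ?_)
  rw [Module.End.mul_apply, Module.End.mul_apply, Module.End.natCast_apply, map_nsmul,
    hNl (n-m) k hk, smul_pow, one_pow, LinearMap.smul_apply, Module.End.one_apply]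
  simp only [Pi.smul_apply, smul_eq_mul, nsmul_eq_mul, Pi.mul_apply, Pi.natCast_apply]
  push_cast
  ring

end QWaux

/-- Resonance expansion: every compactly supported state ψ with
J = [a,b] ⊇ supp ψ ∪ chs(C−I₂) decomposes as 1_J of a finite combination of generalized
resonant states plus a transient part φ₀, and the time evolution on the growing
neighborhood N_{n−1−2|J|_ℤ}(J) is given by the resonance expansion. -/
theorem resonance_expansion
    (C : ℤ → Matrix (Fin 2) (Fin 2) ℂ) (hC : CoinAssumption C)
    (ψ : QWState) (hψfin : Set.Finite {x : ℤ | ψ x ≠ 0})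
    (a b : ℤ)
    (hJψ : ∀ x : ℤ, ψ x ≠ 0 → a ≤ x ∧ x ≤ b)
    (hJC : ∀ x ∈ chsSet C, a ≤ x ∧ x ≤ b) :
    ∃ (Λ : Finset ℂ) (m : ℂ → ℕ) (φ : ℂ → ℕ → QWState) (c : ℂ → ℕ → ℂ) (φ₀ : QWState),
      (∀ lam ∈ Λ, lam ≠ 0) ∧
      (∀ lam ∈ Λ, 1 ≤ m lam) ∧
      (∀ lam ∈ Λ, φ lam 0 = 0) ∧
      -- each φ_{λ,k} is outgoing, with N₁(supp♭ φ_{λ,k}) ⊆ chs(C−I₂), and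
      -- (U−λ)φ_{λ,k} = φ_{λ,k−1}
      (∀ lam ∈ Λ, ∀ k : ℕ, 1 ≤ k → k ≤ m lam →
        Outgoing (φ lam k) ∧
        (∀ z : ℤ, (∃ x : ℤ, φ lam k x 1 ≠ 0 ∧ x - 1 ≤ z) →
          (∃ y : ℤ, φ lam k y 0 ≠ 0 ∧ z ≤ y + 1) → z ∈ chsSet C) ∧
        (∀ x : ℤ, ∀ i : Fin 2,
          qwalk C (φ lam k) x i = lam * φ lam k x i + φ lam (k - 1) x i)) ∧
      -- φ₀ is supported in J and dies out on J after time 2|J|_ℤ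
      (∀ x : ℤ, ¬ (a ≤ x ∧ x ≤ b) → ∀ i : Fin 2, φ₀ x i = 0) ∧
      (∀ n : ℕ, 2 * (b - a + 1) < (n : ℤ) → ∀ x : ℤ, a ≤ x → x ≤ b → ∀ i : Fin 2,
        (qwalk C)^[n] φ₀ x i = 0) ∧
      -- (i) the expansion of ψ
      (∀ x : ℤ, ∀ i : Fin 2,
        ψ x i = jind a b x *
            (∑ lam ∈ Λ, ∑ k ∈ Finset.Icc 1 (m lam), c lam k * φ lam k x i)
          + φ₀ x i) ∧
      -- (ii) the resonance expansion of the time evolution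
      (∀ n : ℕ, 2 * (b - a + 1) < (n : ℤ) → ∀ x : ℤ,
        a - ((n : ℤ) - 1 - 2 * (b - a + 1)) ≤ x →
        x ≤ b + ((n : ℤ) - 1 - 2 * (b - a + 1)) →
        ∀ i : Fin 2,
        (qwalk C)^[n] ψ x i =
          ∑ lam ∈ Λ, lam ^ n *
            ∑ k ∈ Finset.Icc 1 (m lam), c lam k *
              ∑ l ∈ Finset.range k,
                (n.choose l : ℂ) * lam ^ (-(l : ℤ)) * φ lam (k - l) x i) := by
  
  classical
  clear hψfin hC
  by_cases hab : a ≤ b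
  · -- main case
    have hC1 : ∀ x : ℤ, ¬(a ≤ x ∧ x ≤ b) → C x = 1 := by
      intro x hx
      by_contra h
      exact hx (hJC x ⟨x, x, h, h, le_refl x, le_refl x⟩)
    have hψs : ∀ x : ℤ, ¬(a ≤ x ∧ x ≤ b) → ∀ i : Fin 2, ψ x i = 0 := by
      intro x hx i
      by_contra h
      exact hx (hJψ x (fun h0 => h (by rw [h0]; rfl)))
    set M := QWaux.Mop C a b with hMdef
    set D := Module.finrank ℂ (QWaux.Vs a b) with hDdef
    have hcard : Fintype.card ↥(Finset.Icc a b) = (b + 1 - a).toNat := by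
      rw [Fintype.card_coe, Int.card_Icc]
    have hDval : D = 2 * (b + 1 - a).toNat := by
      rw [hDdef, Module.finrank_pi_fintype ℂ]
      have h2 : ∀ p : ↥(Finset.Icc a b), Module.finrank ℂ (Fin 2 → ℂ) = 2 := by
        intro p
        rw [Module.finrank_pi]
        simp
      simp only [Module.finrank_pi, Fintype.card_fin]
      rw [Finset.sum_const, Finset.card_univ, hcard, smul_eq_mul]
      omega
    have hDZ : (D : ℤ) = 2 * (b - a + 1) := by
      rw [hDval]
      push_cast
      omega
    have hD1 : 1 ≤ D := by omega
    have htop := Module.End.iSup_maxGenEigenspace_eq_top (K := ℂ) (V := QWaux.Vs a b) M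
    have hmem : QWaux.Rmap a b ψ ∈ ⨆ μ : ℂ, M.maxGenEigenspace μ := by
      rw [htop]; exact Submodule.mem_top
    obtain ⟨f, hf, hsum⟩ := (Submodule.mem_iSup_iff_exists_finsupp _ _).mp hmem
    have hker : ∀ (μ : ℂ) (u : QWaux.Vs a b), u ∈ M.maxGenEigenspace μ →
        ((M - μ • 1) ^ D) u = 0 := by
      intro μ u hu
      have h1 := Module.End.genEigenspace_le_genEigenspace_finrank M μ ⊤ hu
      rw [Module.End.mem_genEigenspace_nat] at h1
      exact h1
    have hv : ∀ lam : ℂ, ((M - lam • 1) ^ D) (f lam) = 0 := fun lam => hker lam (f lam) (hf lam)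
    set Λ : Finset ℂ := f.support.erase 0 with hΛ
    set φfun : ℂ → ℕ → QWState := fun lam k => QWaux.phichain C a b lam (f lam) D k with hφfun
    set cfun : ℂ → ℕ → ℂ := fun _ k => if k = D then 1 else 0 with hcfun
    set Svec : QWaux.Vs a b := ∑ lam ∈ Λ, f lam with hSvec
    set φ0 : QWState := fun x i => ψ x i - QWaux.Emap a b Svec x i with hφ0
    have hφ0s : ∀ x : ℤ, ¬(a ≤ x ∧ x ≤ b) → ∀ i : Fin 2, φ0 x i = 0 := by
      intro x hx i
      rw [hφ0]
      show ψ x i - QWaux.Emap a b Svec x i = 0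
      rw [hψs x hx i, QWaux.Emap_not_mem a b Svec hx i, sub_zero]
    have hRφ0 : QWaux.Rmap a b φ0 = f 0 := by
      have h1 : QWaux.Rmap a b φ0 = QWaux.Rmap a b ψ - Svec := by
        funext p i
        show φ0 p.1 i = ψ p.1 i - Svec p i
        rw [hφ0]
        show ψ p.1 i - QWaux.Emap a b Svec p.1 i = _
        have hp : a ≤ (p:ℤ) ∧ (p:ℤ) ≤ b := Finset.mem_Icc.mp p.2
        rw [QWaux.Emap_mem a b Svec hp]
      rw [h1, ← hsum]
      rw [Finsupp.sum]
      by_cases h0 : 0 ∈ f.support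
      · rw [← Finset.add_sum_erase _ _ h0, hSvec, hΛ]
        abel
      · rw [Finsupp.notMem_support_iff.mp h0, hSvec, hΛ, Finset.erase_eq_of_notMem h0]
        abel
    have hMD0 : ((M : Module.End ℂ (QWaux.Vs a b)) ^ D) (QWaux.Rmap a b φ0) = 0 := by
      rw [hRφ0]
      have := hv 0
      simpa using this
    have hφ0esc : ∀ n : ℕ, D ≤ n → QWaux.EscD a b (n - D) ((qwalk C)^[n] φ0) := by
      intro n hn
      exact QWaux.transient C a b hC1 φ0 hφ0s hn hMD0
    refine ⟨Λ, fun _ => D, φfun, cfun, φ0, ?_, ?_, ?_, ?_, ?_, ?_, ?_, ?_⟩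
    · intro lam h; exact (Finset.mem_erase.mp h).1
    · intro lam _; exact hD1
    · intro lam _; rfl
    · -- outgoing / chs / chain relation
      intro lam hlam k hk1 hkD
      have hlam0 : lam ≠ 0 := (Finset.mem_erase.mp hlam).1
      refine ⟨?_, ?_, ?_⟩
      · exact QWaux.phichain_outgoing C a b lam (f lam) D hab k
      · intro z hx hy
        obtain ⟨x, hx1, hxz⟩ := hx
        obtain ⟨y, hy0, hzy⟩ := hy
        have hR : ∃ z1 : ℤ, z1 ≤ x - 1 ∧ C z1 ≠ 1 := by
          by_contra hcon
          push_neg at hcon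
          exact hx1 (QWaux.phichain_vanish1 C a b lam (f lam) D hab hlam0 hC1 (hv lam) k hkD x
            (fun z hz => hcon z hz))
        have hL : ∃ z2 : ℤ, y + 1 ≤ z2 ∧ C z2 ≠ 1 := by
          by_contra hcon
          push_neg at hcon
          exact hy0 (QWaux.phichain_vanish0 C a b lam (f lam) D hab hlam0 hC1 (hv lam) k hkD y
            (fun z hz => hcon z hz))
        obtain ⟨z1, hz1, hz1c⟩ := hR
        obtain ⟨z2, hz2, hz2c⟩ := hL
        exact ⟨z1, z2, hz1c, hz2c, by omega, by omega⟩
      · intro x i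
        exact QWaux.phichain_rel C a b lam (f lam) D hab hlam0 hC1 (hv lam) k hkD x i
    · exact hφ0s
    · -- transient on J
      intro n hn x hx1 hx2 i
      have hDn : D < n := by omega
      have hesc := hφ0esc n (by omega)
      exact QWaux.escD_zero_on a b hesc (by omega) (by omega) i
    · -- (i)
      have hinner : ∀ g : ℕ → ℂ,
          ∑ k ∈ Finset.Icc 1 D, (if k = D then (1:ℂ) else 0) * g k = g D := by
        intro g
        simp only [ite_mul, one_mul, zero_mul]
        rw [Finset.sum_ite_eq' (Finset.Icc 1 D) D g]
        rw [if_pos (Finset.mem_Icc.mpr ⟨hD1, le_refl D⟩)]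
      have hwvecD : ∀ lam : ℂ, QWaux.wvec C a b lam (f lam) D D = f lam := by
        intro lam
        rw [QWaux.wvec]
        simp
      have hφD : ∀ lam : ℂ, ∀ x : ℤ, (a ≤ x ∧ x ≤ b) → ∀ i : Fin 2,
          φfun lam D x i = QWaux.Emap a b (f lam) x i := by
        intro lam x hx i
        show QWaux.phichain C a b lam (f lam) D D x i = _
        rw [QWaux.phichain_J C a b lam (f lam) D (hv lam) D x hx i, hwvecD lam]
      intro x i
      by_cases hx : a ≤ x ∧ x ≤ b
      · have hj : jind a b x = 1 := by simp [jind, hx]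
        rw [hj, one_mul]
        have hsum1 : ∑ lam ∈ Λ, ∑ k ∈ Finset.Icc 1 D, cfun lam k * φfun lam k x i
            = QWaux.Emap a b Svec x i := by
          have hstep : ∀ lam ∈ Λ, ∑ k ∈ Finset.Icc 1 D, cfun lam k * φfun lam k x i
              = QWaux.Emap a b (f lam) x i := by
            intro lam _
            have : ∑ k ∈ Finset.Icc 1 D, cfun lam k * φfun lam k x i
                = ∑ k ∈ Finset.Icc 1 D, (if k = D then (1:ℂ) else 0) * φfun lam k x i := by
              refine Finset.sum_congr rfl (fun k _ => ?_)
              rw [hcfun]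
            rw [this, hinner (fun k => φfun lam k x i)]
            exact hφD lam x hx i
          rw [Finset.sum_congr rfl hstep, hSvec, map_sum]
          rw [Finset.sum_apply, Finset.sum_apply]
        rw [hsum1, hφ0]
        show ψ x i = QWaux.Emap a b Svec x i + (ψ x i - QWaux.Emap a b Svec x i)
        ring
      · have hj : jind a b x = 0 := by simp [jind, hx]
        rw [hj, zero_mul, zero_add, hφ0]
        show ψ x i = ψ x i - QWaux.Emap a b Svec x i
        rw [QWaux.Emap_not_mem a b Svec hx i, sub_zero]
    · -- (ii)
      have hinner : ∀ g : ℕ → ℂ,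
          ∑ k ∈ Finset.Icc 1 D, (if k = D then (1:ℂ) else 0) * g k = g D := by
        intro g
        simp only [ite_mul, one_mul, zero_mul]
        rw [Finset.sum_ite_eq' (Finset.Icc 1 D) D g]
        rw [if_pos (Finset.mem_Icc.mpr ⟨hD1, le_refl D⟩)]
      have hwvecD : ∀ lam : ℂ, QWaux.wvec C a b lam (f lam) D D = f lam := by
        intro lam
        rw [QWaux.wvec]
        simp
      have hφD : ∀ lam : ℂ, ∀ x : ℤ, (a ≤ x ∧ x ≤ b) → ∀ i : Fin 2,
          φfun lam D x i = QWaux.Emap a b (f lam) x i := by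
        intro lam x hx i
        show QWaux.phichain C a b lam (f lam) D D x i = _
        rw [QWaux.phichain_J C a b lam (f lam) D (hv lam) D x hx i, hwvecD lam]
      have hiter : ∀ (nn : ℕ) (ζ : QWState), (qwalk C)^[nn] ζ = (QWaux.Ulin C ^ nn) ζ := by
        intro nn ζ
        have hcoe : ⇑(QWaux.Ulin C) = qwalk C := rfl
        rw [Module.End.pow_apply, hcoe]
      intro n hn x hx1 hx2 i
      have hDn : D < n := by omega
      have hzero0 : (qwalk C)^[n] φ0 x i = 0 := by
        refine QWaux.escD_zero_on a b (hφ0esc n (by omega)) ?_ ?_ i <;> omega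
      have hψsum : ψ = QWaux.Emap a b Svec + φ0 := by
        funext x' i'
        show ψ x' i' = QWaux.Emap a b Svec x' i' + (ψ x' i' - QWaux.Emap a b Svec x' i')
        ring
      rw [hψsum, hiter, map_add]
      simp only [Pi.add_apply]
      rw [← hiter n φ0, hzero0, add_zero, hSvec, map_sum, map_sum,
        Finset.sum_apply, Finset.sum_apply]
      refine Finset.sum_congr rfl (fun lam hlam => ?_)
      have hlam0 : lam ≠ 0 := (Finset.mem_erase.mp hlam).1
      -- collapse the RHS inner sum
      have hrhs : lam ^ n * ∑ k ∈ Finset.Icc 1 D, cfun lam k *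
            ∑ l ∈ Finset.range k, (n.choose l : ℂ) * lam ^ (-(l:ℤ)) * φfun lam (k - l) x i
          = ∑ j ∈ Finset.range D,
              lam ^ n * ((n.choose j : ℂ) * lam ^ (-(j:ℤ)) * φfun lam (D - j) x i) := by
        have : ∑ k ∈ Finset.Icc 1 D, cfun lam k *
              ∑ l ∈ Finset.range k, (n.choose l : ℂ) * lam ^ (-(l:ℤ)) * φfun lam (k - l) x i
            = ∑ k ∈ Finset.Icc 1 D, (if k = D then (1:ℂ) else 0) *
              ∑ l ∈ Finset.range k, (n.choose l : ℂ) * lam ^ (-(l:ℤ)) * φfun lam (k - l) x i := by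
          refine Finset.sum_congr rfl (fun k _ => ?_)
          rw [hcfun]
        rw [this, hinner (fun k => ∑ l ∈ Finset.range k,
          (n.choose l : ℂ) * lam ^ (-(l:ℤ)) * φfun lam (k - l) x i), Finset.mul_sum]
      rw [hrhs]
      -- the main evolution formula
      have hT : QWaux.EscD a b 0
          (fun x' i' => φfun lam D x' i' - QWaux.Emap a b (f lam) x' i') := by
        intro x'
        refine ⟨fun hne => ?_, fun hne => ?_⟩ <;> dsimp only at hne
        · by_cases hx' : a ≤ x' ∧ x' ≤ b
          · rw [hφD lam x' hx' 0, sub_self] at hne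
            exact absurd rfl hne
          · rw [QWaux.Emap_not_mem a b (f lam) hx' 0, sub_zero] at hne
            have h0 : ¬ b < x' := fun hb =>
              hne (QWaux.phichain_shape0 C a b lam (f lam) D D x' hb)
            push_cast
            omega
        · by_cases hx' : a ≤ x' ∧ x' ≤ b
          · rw [hφD lam x' hx' 1, sub_self] at hne
            exact absurd rfl hne
          · rw [QWaux.Emap_not_mem a b (f lam) hx' 1, sub_zero] at hne
            have h0 : ¬ x' < a := fun hb =>
              hne (QWaux.phichain_shape1 C a b lam (f lam) D hab D x' hb)
            push_cast
            omega
      have hfl : QWaux.Emap a b (f lam) =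
          φfun lam D - (fun x' i' => φfun lam D x' i' - QWaux.Emap a b (f lam) x' i') := by
        funext x' i'
        simp only [Pi.sub_apply]
        ring
      rw [hfl, map_sub]
      simp only [Pi.sub_apply]
      have hTzero : (QWaux.Ulin C ^ n)
          (fun x' i' => φfun lam D x' i' - QWaux.Emap a b (f lam) x' i') x i = 0 := by
        rw [← hiter n]
        have h0 := QWaux.escD_iter C a b hC1 hT n
        refine QWaux.escD_zero_on a b h0 ?_ ?_ i <;> push_cast <;> omega
      rw [hTzero, sub_zero, ← hiter n]
      have hmain := QWaux.phichain_evol C a b lam (f lam) D hab hlam0 hC1 (hv lam) n D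
        (le_refl D) x i
      have hφeq : (qwalk C)^[n] (φfun lam D) x i = ∑ m ∈ Finset.range (n+1),
          lam ^ m * (n.choose m : ℂ) * φfun lam (D - (n - m)) x i := hmain
      rw [hφeq]
      -- reflect the sum
      have hLHS : ∑ m ∈ Finset.range (n+1),
            lam ^ m * (n.choose m : ℂ) * φfun lam (D - (n - m)) x i
          = ∑ j ∈ Finset.range (n+1),
            lam ^ (n - j) * (n.choose j : ℂ) * φfun lam (D - j) x i := by
        rw [← Finset.sum_range_reflect]
        refine Finset.sum_congr rfl (fun j hj => ?_)
        have hj' : j ≤ n := by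
          have := Finset.mem_range.mp hj
          omega
        have h1 : n + 1 - 1 - j = n - j := by omega
        have h2 : n - (n - j) = j := by omega
        rw [h1, h2, Nat.choose_symm hj']
      rw [hLHS]
      -- truncate to range D
      have htrunc : ∑ j ∈ Finset.range (n+1),
            lam ^ (n - j) * (n.choose j : ℂ) * φfun lam (D - j) x i
          = ∑ j ∈ Finset.range D,
            lam ^ (n - j) * (n.choose j : ℂ) * φfun lam (D - j) x i := by
        symm
        refine Finset.sum_subset (Finset.range_subset_range.mpr (by omega)) (fun j hj hnj => ?_)
        have hjD : D ≤ j := by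
          have := Finset.mem_range.not.mp hnj
          omega
        have h0 : D - j = 0 := by omega
        rw [h0]
        have hz : φfun lam 0 x i = 0 := rfl
        rw [hz, mul_zero]
      rw [htrunc]
      refine Finset.sum_congr rfl (fun j hj => ?_)
      have hjn : j ≤ n := by
        have := Finset.mem_range.mp hj
        omega
      have hzp : lam ^ (n - j) = lam ^ n * lam ^ (-(j:ℤ)) := by
        rw [← zpow_natCast lam (n - j), ← zpow_natCast lam n, ← zpow_add₀ hlam0]
        congr 1
        omega
      rw [hzp]
      ring
  · -- degenerate case: J empty, ψ = 0
    have hψ0 : ∀ x : ℤ, ∀ i : Fin 2, ψ x i = 0 := by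
      intro x i
      by_contra h
      have hne : ψ x ≠ 0 := fun h0 => h (by rw [h0]; rfl)
      have := hJψ x hne
      omega
    have hψz : ψ = fun _ _ => (0:ℂ) := funext fun x => funext fun i => hψ0 x i
    have hfix : qwalk C (fun _ _ => (0:ℂ)) = fun _ _ => (0:ℂ) := by
      funext x i
      fin_cases i
      · show (C (x+1)).mulVec 0 0 = 0
        rw [Matrix.mulVec_zero]
        rfl
      · show (C (x-1)).mulVec 0 1 = 0
        rw [Matrix.mulVec_zero]
        rfl
    have hit : ∀ n : ℕ, (qwalk C)^[n] ψ = fun _ _ => (0:ℂ) := by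
      intro n
      rw [hψz, Function.iterate_fixed hfix n]
    refine ⟨∅, fun _ => 1, fun _ _ => fun _ _ => 0, fun _ _ => 0, ψ, ?_, ?_, ?_, ?_, ?_, ?_, ?_, ?_⟩
    · intro lam h; exact absurd h (Finset.notMem_empty lam)
    · intro lam h; exact absurd h (Finset.notMem_empty lam)
    · intro lam h; exact absurd h (Finset.notMem_empty lam)
    · intro lam h; exact absurd h (Finset.notMem_empty lam)
    · intro x _ i; exact hψ0 x i
    · intro n _ x hx1 hx2 i
      rw [hit n]
    · intro x i
      rw [Finset.sum_empty, mul_zero, zero_add]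
    · intro n _ x _ _ i
      rw [hit n, Finset.sum_empty]
end
end

section
/- Let C : ℤ → U(2) satisfy the standing Assumption and let U = S∘C. Let ψ : ℤ → ℂ² be compactly supported and let J be a bounded interval with J ⊇ supp ψ ∪ chs(C−I₂). Let M_J = 1_J U 1_J, regarded as a linear operator on the (2|J|_ℤ)-dimensional space of maps ℤ → ℂ² supported in J. Set Λ₀ := max{|λ| : λ is a nonzero eigenvalue of M_J} (Λ₀ := 0 if there is none), and let m₀ be the maximal algebraic multiplicity among nonzero eigenvalues λ of M_J with |λ| = Λ₀ (m₀ := 1 if Λ₀ = 0). Then Λ₀ < 1 and there exist a constant M > 0 and n₀ ∈ ℕ such that for all n ≥ n₀, ‖1_J U^n ψ‖_ℋ ≤ M n^{m₀−1} Λ₀^n. -/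
noncomputable section

open scoped ComplexConjugate

/-- Extension by zero of a map defined on J ∩ ℤ = [a,b] ∩ ℤ to all of ℤ. -/
def embed (a b : ℤ) (f : ↥(Set.Icc a b) → Fin 2 → ℂ) : QWState :=
  fun x => if hx : x ∈ Set.Icc a b then f ⟨x, hx⟩ else 0

/-!
The coin is unitary and trivial outside `J = [a, b]`, so `M_J` is a contraction and its
eigenvalues have modulus at most one. An eigenvalue of modulus one would leave no mass at the
boundary, making the finitely supported eigenvector an eigenvector of the walk itself on
`[a, b + 1]`; at the rightmost site of its support nothing enters from the right, and
`c₂₂ ≠ 0` then kills both components there. Outside `J` left-movers only move left and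
right-movers only move right, so what leaves `J` never returns: `1_J U^n ψ = M_J^n (1_J ψ)`.
The decay rate comes from the generalized eigenspaces of `M_J`: on that of `λ ≠ 0`, of dimension
`d`, the binomial expansion of `(λ + N)^n` with `N^d = 0` gives growth `O(n^(d-1) |λ|^n)`, and
on that of `0` the powers vanish eventually.
-/

open Module Matrix Filter Asymptotics

theorem IsNilpotent.pow_finrank_eq_zero {R M : Type*} [CommRing R] [IsDomain R] [AddCommGroup M]
    [Module R M] [Module.Finite R M] [Module.Free R M] {φ : Module.End R M} (h : IsNilpotent φ) :
    φ ^ finrank R M = 0 := by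
  simpa only [h.charpoly_eq_X_pow_finrank, map_pow, Polynomial.aeval_X] using φ.aeval_self_charpoly

namespace Module.End

variable {K V : Type*} [Field K] [AddCommGroup V] [Module K V]

theorem pow_finrank_sub_algebraMap_apply_of_mem_maxGenEigenspace [FiniteDimensional K V]
    (T : End K V) (μ : K) {w : V} (hw : w ∈ T.maxGenEigenspace μ) :
    ((T - algebraMap K (End K V) μ) ^ finrank K (T.maxGenEigenspace μ)) w = 0 := by
  have h := DFunLike.congr_fun
    (T.isNilpotent_restrict_maxGenEigenspace_sub_algebraMap μ).pow_finrank_eq_zero ⟨w, hw⟩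
  erw [pow_restrict, LinearMap.restrict_apply] at h
  exact congr_arg Subtype.val h

theorem pow_apply_eq_sum_choose_smul (T : End K V) (μ : K) {d : ℕ} {w : V}
    (hw : ((T - algebraMap K (End K V) μ) ^ d) w = 0) (n : ℕ) :
    (T ^ n) w = ∑ m ∈ Finset.range d,
      (n.choose m : K) • μ ^ (n - m) • ((T - algebraMap K (End K V) μ) ^ m) w := by
  set N := T - algebraMap K (End K V) μ
  have hN : ∀ m, d ≤ m → (N ^ m) w = 0 := fun m hm => by
    rw [← Nat.sub_add_cancel hm, pow_add, mul_apply, hw, map_zero]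
  have hterm (m : ℕ) : (N ^ m * algebraMap K (End K V) μ ^ (n - m) * (n.choose m : End K V)) w
      = (n.choose m : K) • μ ^ (n - m) • (N ^ m) w := by
    rw [← map_pow, mul_apply, mul_apply, algebraMap_end_apply, natCast_apply, map_smul,
      map_nsmul, Nat.cast_smul_eq_nsmul, smul_comm]
  rw [show T = N + algebraMap K (End K V) μ by simp [N],
    (Algebra.commute_algebraMap_right μ N).add_pow, LinearMap.sum_apply]
  simp_rw [hterm]
  -- both sums agree with the one over `m < min (n + 1) d`
  rw [← Finset.sum_subset (Finset.range_subset_range.2 (min_le_left _ _)),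
    Finset.sum_subset (Finset.range_subset_range.2 (min_le_right _ _))]
  · intro m hm hm'
    simp only [Finset.mem_range, lt_min_iff, not_and_or, not_lt] at hm hm'
    simp [Nat.choose_eq_zero_of_lt (by omega : n < m)]
  · intro m hm hm'
    simp only [Finset.mem_range, lt_min_iff, not_and_or, not_lt] at hm hm'
    simp [hN m (by omega)]

end Module.End

theorem isBigO_natCast_pow_pow {k l : ℕ} (hkl : k ≤ l) :
    (fun n : ℕ => (n : ℝ) ^ k) =O[atTop] fun n => (n : ℝ) ^ l :=
  (isBigO_pow_pow_cobounded_of_le hkl).comp_tendsto tendsto_natCast_atTop_cobounded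

theorem isBigO_natCast_pow_mul_pow {k l : ℕ} {r s : ℝ} (hr : 0 ≤ r)
    (h : r < s ∨ r = s ∧ k ≤ l) :
    (fun n : ℕ => (n : ℝ) ^ k * r ^ n) =O[atTop] fun n => (n : ℝ) ^ l * s ^ n := by
  rcases h with hrs | ⟨rfl, hkl⟩
  · refine (isLittleO_pow_const_mul_const_pow_const_pow_of_norm_lt k
      (show ‖r‖ < s by rwa [Real.norm_of_nonneg hr])).isBigO.trans ?_
    simpa using (isBigO_natCast_pow_pow (Nat.zero_le l)).mul (isBigO_refl (fun n => s ^ n) atTop)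
  · exact (isBigO_natCast_pow_pow hkl).mul (isBigO_refl _ _)

section GeneralizedEigenvectors

variable {𝕜 V : Type*} [NormedField 𝕜] [NormedAddCommGroup V] [NormedSpace 𝕜 V]

theorem isBigO_choose_smul_pow_smul {μ : 𝕜} (hμ : μ ≠ 0) {m k : ℕ} (hmk : m ≤ k) (x : V) :
    (fun n : ℕ => (n.choose m : 𝕜) • μ ^ (n - m) • x) =O[atTop]
      fun n => (n : ℝ) ^ k * ‖μ‖ ^ n := by
  refine IsBigO.of_bound (‖x‖ / ‖μ‖ ^ m) ?_
  filter_upwards [eventually_ge_atTop (max m 1)] with n hn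
  have hchoose : ‖(n.choose m : 𝕜)‖ ≤ (n : ℝ) ^ k :=
    calc ‖(n.choose m : 𝕜)‖ ≤ n.choose m := by simpa using Nat.norm_cast_le (α := 𝕜) (n.choose m)
      _ ≤ (n : ℝ) ^ m := by exact_mod_cast Nat.choose_le_pow n m
      _ ≤ (n : ℝ) ^ k := pow_le_pow_right₀ (by exact_mod_cast le_of_max_le_right hn) hmk
  rw [norm_smul, norm_smul, norm_pow, pow_sub₀ _ (norm_ne_zero_iff.2 hμ) (le_of_max_le_left hn),
    Real.norm_of_nonneg (by positivity)]
  calc ‖(n.choose m : 𝕜)‖ * (‖μ‖ ^ n * (‖μ‖ ^ m)⁻¹ * ‖x‖)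
      ≤ (n : ℝ) ^ k * (‖μ‖ ^ n * (‖μ‖ ^ m)⁻¹ * ‖x‖) := by gcongr
    _ = ‖x‖ / ‖μ‖ ^ m * ((n : ℝ) ^ k * ‖μ‖ ^ n) := by ring

theorem isBigO_pow_apply_of_mem_maxGenEigenspace [FiniteDimensional 𝕜 V] (T : Module.End 𝕜 V)
    {μ : 𝕜} (hμ : μ ≠ 0) {w : V} (hw : w ∈ T.maxGenEigenspace μ) :
    (fun n : ℕ => (T ^ n) w) =O[atTop]
      fun n => (n : ℝ) ^ (finrank 𝕜 (T.maxGenEigenspace μ) - 1) * ‖μ‖ ^ n := by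
  simp_rw [T.pow_apply_eq_sum_choose_smul μ
    (T.pow_finrank_sub_algebraMap_apply_of_mem_maxGenEigenspace μ hw)]
  refine IsBigO.fun_sum fun m hm => ?_
  exact isBigO_choose_smul_pow_smul hμ (Nat.le_sub_one_of_lt (Finset.mem_range.1 hm)) _

theorem isBigO_pow_apply [IsAlgClosed 𝕜] [FiniteDimensional 𝕜 V] (T : Module.End 𝕜 V)
    {Λ : ℝ} {m : ℕ} (hΛ : ∀ μ, μ ≠ 0 → T.HasEigenvalue μ → ‖μ‖ ≤ Λ)
    (hm : ∀ μ, μ ≠ 0 → T.HasEigenvalue μ → ‖μ‖ = Λ → finrank 𝕜 (T.maxGenEigenspace μ) ≤ m)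
    (v : V) : (fun n : ℕ => (T ^ n) v) =O[atTop] fun n => (n : ℝ) ^ (m - 1) * Λ ^ n := by
  have hv : v ∈ ⨆ μ, T.maxGenEigenspace μ := by
    rw [T.iSup_maxGenEigenspace_eq_top]; trivial
  refine Submodule.iSup_induction _ (motive := fun v => (fun n : ℕ => (T ^ n) v) =O[atTop] _)
    hv (fun μ w hw => ?_) (by simpa using isBigO_zero _ _)
    (fun x y hx hy => by simpa only [map_add] using hx.add hy)
  by_cases hμ : μ = 0
  · subst hμ
    have hTw : (T ^ finrank 𝕜 (T.maxGenEigenspace 0)) w = 0 := by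
      simpa using T.pow_finrank_sub_algebraMap_apply_of_mem_maxGenEigenspace 0 hw
    refine (isBigO_zero _ _).congr' ?_ EventuallyEq.rfl
    filter_upwards [eventually_ge_atTop (finrank 𝕜 (T.maxGenEigenspace 0))] with n hn
    rw [← Nat.sub_add_cancel hn, pow_add, Module.End.mul_apply, hTw, map_zero]
  by_cases hw0 : w = 0
  · simpa [hw0] using isBigO_zero _ _
  have hev : T.HasEigenvalue μ :=
    Module.End.HasUnifEigenvalue.lt zero_lt_one (k := ⊤) ((Submodule.ne_bot_iff _).2 ⟨w, hw, hw0⟩)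
  refine (isBigO_pow_apply_of_mem_maxGenEigenspace T hμ hw).trans
    (isBigO_natCast_pow_mul_pow (norm_nonneg μ) ?_)
  rcases (hΛ μ hμ hev).lt_or_eq with h | h
  · exact Or.inl h
  · exact Or.inr ⟨h, Nat.sub_le_sub_right (hm μ hμ hev h) 1⟩

end GeneralizedEigenvectors

theorem Finset.sum_Icc_comp_add_of_support_subset {M : Type*} [AddCommMonoid M] {f : ℤ → M}
    {a b c d k : ℤ} (hf : Function.support f ⊆ Set.Icc a b) (hc : c + k ≤ a) (hd : b ≤ d + k) :
    ∑ x ∈ Finset.Icc c d, f (x + k) = ∑ x ∈ Finset.Icc a b, f x := by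
  have hshift : ∑ x ∈ Finset.Icc c d, f (x + k) = ∑ y ∈ Finset.Icc (c + k) (d + k), f y := by
    rw [← Finset.map_add_right_Icc, Finset.sum_map]
    rfl
  rw [hshift]
  refine (Finset.sum_subset (Finset.Icc_subset_Icc hc hd) fun x _ hx => ?_).symm
  exact Function.notMem_support.1 fun h => hx (Finset.mem_Icc.2 (hf h))

theorem sum_norm_sq_mulVec_of_mem_unitaryGroup {𝕜 n : Type*} [RCLike 𝕜] [Fintype n]
    [DecidableEq n] {A : Matrix n n 𝕜} (hA : A ∈ unitaryGroup n 𝕜) (v : n → 𝕜) :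
    ∑ i, ‖(A *ᵥ v) i‖ ^ 2 = ∑ i, ‖v i‖ ^ 2 := by
  have h (w : n → 𝕜) : ((∑ i, ‖w i‖ ^ 2 : ℝ) : 𝕜) = star w ⬝ᵥ w := by
    simp [dotProduct, RCLike.conj_mul]
  apply RCLike.ofReal_injective (K := 𝕜)
  rw [h, h, star_mulVec, ← dotProduct_mulVec, mulVec_mulVec, ← star_eq_conjTranspose,
    (mem_unitaryGroup_iff').1 hA, one_mulVec]

def normSqOn (s : Finset ℤ) (φ : QWState) : ℝ :=
  ∑ x ∈ s, ∑ i, ‖φ x i‖ ^ 2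

/-- `1_J φ` for `J = [a, b]`, as a vector of the space on which `M_J` acts. -/
def restrictIcc (a b : ℤ) (φ : QWState) : ↥(Set.Icc a b) → Fin 2 → ℂ :=
  fun z => φ z

/-- Nothing outside `[a, b]` is moving towards it. -/
def NoIncoming (a b : ℤ) (φ : QWState) : Prop :=
  (∀ x, b < x → φ x 0 = 0) ∧ ∀ x, x < a → φ x 1 = 0

section QuantumWalk

variable {C : ℤ → Matrix (Fin 2) (Fin 2) ℂ} {a b : ℤ}

theorem qwalk_apply_zero (C : ℤ → Matrix (Fin 2) (Fin 2) ℂ) (φ : QWState) (x : ℤ) :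
    qwalk C φ x 0 = (C (x + 1) *ᵥ φ (x + 1)) 0 := rfl

theorem qwalk_apply_one (C : ℤ → Matrix (Fin 2) (Fin 2) ℂ) (φ : QWState) (x : ℤ) :
    qwalk C φ x 1 = (C (x - 1) *ᵥ φ (x - 1)) 1 := rfl

theorem embed_apply_of_mem {f : ↥(Set.Icc a b) → Fin 2 → ℂ} {x : ℤ} (hx : x ∈ Set.Icc a b) :
    embed a b f x = f ⟨x, hx⟩ := dif_pos hx

theorem embed_apply_of_notMem {f : ↥(Set.Icc a b) → Fin 2 → ℂ} {x : ℤ}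
    (hx : x ∉ Set.Icc a b) : embed a b f x = 0 := dif_neg hx

theorem support_embed_subset (f : ↥(Set.Icc a b) → Fin 2 → ℂ) :
    Function.support (embed a b f) ⊆ Set.Icc a b :=
  fun _ hx => by_contra fun h => hx (embed_apply_of_notMem h)

theorem restrictIcc_embed (f : ↥(Set.Icc a b) → Fin 2 → ℂ) : restrictIcc a b (embed a b f) = f :=
  funext fun z => embed_apply_of_mem z.2

theorem normSqOn_pos {s : Finset ℤ} {φ : QWState} (hφ : Function.support φ ⊆ s) (hne : φ ≠ 0) :
    0 < normSqOn s φ := by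
  obtain ⟨x, hx⟩ := Function.ne_iff.1 hne
  obtain ⟨i, hi⟩ := Function.ne_iff.1 hx
  refine Finset.sum_pos' (fun _ _ => by positivity) ⟨x, hφ hx, ?_⟩
  exact Finset.sum_pos' (fun _ _ => by positivity) ⟨i, Finset.mem_univ _, by positivity⟩

theorem apply_eq_zero_of_normSqOn_eq_zero {s : Finset ℤ} {φ : QWState} (h : normSqOn s φ = 0)
    {x : ℤ} (hx : x ∈ s) : φ x = 0 := by
  have hx := (Finset.sum_eq_zero_iff_of_nonneg fun _ _ => by positivity).1 h x hx
  funext i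
  simpa using (Finset.sum_eq_zero_iff_of_nonneg fun _ _ => by positivity).1 hx i (Finset.mem_univ _)

theorem sqrt_normSqOn_Icc_le (φ : QWState) :
    Real.sqrt (normSqOn (Finset.Icc a b) φ) ≤
      Real.sqrt (2 * (Finset.Icc a b).card) * ‖restrictIcc a b φ‖ := by
  rw [← Real.sqrt_sq (norm_nonneg (restrictIcc a b φ)), ← Real.sqrt_mul (by positivity)]
  refine Real.sqrt_le_sqrt ?_
  have hle : ∀ x ∈ Finset.Icc a b, ∑ i, ‖φ x i‖ ^ 2 ≤ 2 * ‖restrictIcc a b φ‖ ^ 2 := by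
    intro x hx
    have hx' : x ∈ Set.Icc a b := by simpa using hx
    calc ∑ i, ‖φ x i‖ ^ 2 ≤ ∑ _i : Fin 2, ‖restrictIcc a b φ‖ ^ 2 := by
          gcongr with i
          exact (norm_le_pi_norm (restrictIcc a b φ ⟨x, hx'⟩) i).trans (norm_le_pi_norm _ _)
      _ = 2 * ‖restrictIcc a b φ‖ ^ 2 := by simp
  calc normSqOn (Finset.Icc a b) φ ≤ ∑ _x ∈ Finset.Icc a b, 2 * ‖restrictIcc a b φ‖ ^ 2 :=
        Finset.sum_le_sum hle
    _ = _ := by rw [Finset.sum_const, nsmul_eq_mul]; ring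

theorem normSqOn_qwalk (hCu : ∀ x, C x ∈ unitaryGroup (Fin 2) ℂ) {φ : QWState}
    (hφ : Function.support φ ⊆ Set.Icc a b) :
    normSqOn (Finset.Icc (a - 1) (b + 1)) (qwalk C φ) = normSqOn (Finset.Icc a b) φ := by
  have hsupp (i : Fin 2) : Function.support (fun y => ‖(C y *ᵥ φ y) i‖ ^ 2) ⊆ Set.Icc a b :=
    fun y hy => hφ fun h => hy (by simp [h])
  have h0 := Finset.sum_Icc_comp_add_of_support_subset (hsupp 0) (k := 1) (c := a - 1)
    (d := b + 1) (by omega) (by omega)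
  have h1 := Finset.sum_Icc_comp_add_of_support_subset (hsupp 1) (k := -1) (c := a - 1)
    (d := b + 1) (by omega) (by omega)
  simp only [← sub_eq_add_neg] at h1
  simp only [normSqOn, Fin.sum_univ_two, Finset.sum_add_distrib, qwalk_apply_zero,
    qwalk_apply_one, h0, h1]
  rw [← Finset.sum_add_distrib, ← Finset.sum_add_distrib]
  refine Finset.sum_congr rfl fun y _ => ?_
  simpa only [Fin.sum_univ_two] using sum_norm_sq_mulVec_of_mem_unitaryGroup (hCu y) (φ y)

theorem normSqOn_sdiff_add_mul_normSqOn (hCu : ∀ x, C x ∈ unitaryGroup (Fin 2) ℂ)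
    {φ : QWState} (hφ : Function.support φ ⊆ Set.Icc a b) {lam : ℂ}
    (heig : ∀ x ∈ Set.Icc a b, qwalk C φ x = lam • φ x) :
    normSqOn (Finset.Icc (a - 1) (b + 1) \ Finset.Icc a b) (qwalk C φ) +
      ‖lam‖ ^ 2 * normSqOn (Finset.Icc a b) φ = normSqOn (Finset.Icc a b) φ := by
  have hinner :
      normSqOn (Finset.Icc a b) (qwalk C φ) = ‖lam‖ ^ 2 * normSqOn (Finset.Icc a b) φ := by
    simp only [normSqOn, Finset.mul_sum]
    refine Finset.sum_congr rfl fun x hx => Finset.sum_congr rfl fun i _ => ?_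
    rw [heig x (by simpa using hx), Pi.smul_apply, norm_smul, mul_pow]
  rw [← hinner, ← normSqOn_qwalk hCu hφ]
  exact Finset.sum_sdiff (Finset.Icc_subset_Icc (by omega) (by omega))

/-- Look at the rightmost site `t` of the support: nothing enters `t` from the right, so the
left component at `t` vanishes, and then `c₂₂(t) ≠ 0` forces the right component to vanish. -/
theorem eq_zero_of_qwalk_eq_smul (hC22 : ∀ x, C x 1 1 ≠ 0) {φ : QWState}
    (hφ : Function.support φ ⊆ Set.Icc a b) {lam : ℂ} (hlam : lam ≠ 0)
    (h : ∀ x ∈ Set.Icc a (b + 1), qwalk C φ x = lam • φ x) : φ = 0 := by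
  by_contra hne
  obtain ⟨t, ht, htmax⟩ := Set.exists_max_image _ id ((Set.finite_Icc a b).subset hφ)
    (Function.support_nonempty_iff.2 hne)
  have hright : φ (t + 1) = 0 := by
    by_contra h'
    exact absurd (htmax _ h') (by simp)
  have hta : t ∈ Set.Icc a b := hφ ht
  have hleft0 : φ t 0 = 0 := by
    have := congr_fun (h t ⟨hta.1, by linarith [hta.2]⟩) 0
    rw [qwalk_apply_zero, hright, mulVec_zero] at this
    simpa [hlam, eq_comm] using this
  have hleft1 : φ t 1 = 0 := by
    have := congr_fun (h (t + 1) ⟨by linarith [hta.1], by linarith [hta.2]⟩) 1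
    rw [qwalk_apply_one, add_sub_cancel_right, hright] at this
    simpa [mulVec, dotProduct, Fin.sum_univ_two, hleft0, hC22 t] using this
  exact ht (funext fun i => by fin_cases i <;> assumption)

theorem norm_lt_one_of_hasEigenvalue (hC : CoinAssumption C)
    {M : Module.End ℂ (↥(Set.Icc a b) → Fin 2 → ℂ)}
    (hM : ∀ f : ↥(Set.Icc a b) → Fin 2 → ℂ, ∀ z : ↥(Set.Icc a b),
      M f z = qwalk C (embed a b f) (z : ℤ))
    {lam : ℂ} (hlam : lam ≠ 0) (hev : M.HasEigenvalue lam) : ‖lam‖ < 1 := by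
  obtain ⟨f, hf, hf0⟩ := hev.exists_hasEigenvector
  set φ := embed a b f
  have hφ : Function.support φ ⊆ Set.Icc a b := support_embed_subset f
  have hφne : φ ≠ 0 := fun h => hf0 <| by
    rw [← restrictIcc_embed f, show embed a b f = 0 from h]
    rfl
  obtain ⟨z, -⟩ := Function.ne_iff.1 hf0
  have hab : a ≤ b := z.2.1.trans z.2.2
  have heig : ∀ x ∈ Set.Icc a b, qwalk C φ x = lam • φ x := fun x hx => by
    rw [show φ x = f ⟨x, hx⟩ from embed_apply_of_mem hx, ← hM f ⟨x, hx⟩,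
      Module.End.mem_eigenspace_iff.1 hf]
    rfl
  have hpos : 0 < normSqOn (Finset.Icc a b) φ := normSqOn_pos (by simpa using hφ) hφne
  have hbalance := normSqOn_sdiff_add_mul_normSqOn hC.unitary hφ heig
  have hboundary : 0 ≤ normSqOn (Finset.Icc (a - 1) (b + 1) \ Finset.Icc a b) (qwalk C φ) :=
    Finset.sum_nonneg fun _ _ => by positivity
  have hsq : ‖lam‖ ^ 2 ≤ 1 := le_of_mul_le_mul_right (by linarith) hpos
  refine lt_of_le_of_ne ((pow_le_one_iff_of_nonneg (norm_nonneg _) two_ne_zero).1 hsq)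
    fun h1 => hφne (eq_zero_of_qwalk_eq_smul hC.d22 hφ hlam fun x hx => ?_)
  rw [h1, one_pow, one_mul, add_eq_right] at hbalance
  obtain rfl | hlt := eq_or_lt_of_le hx.2
  · rw [apply_eq_zero_of_normSqOn_eq_zero hbalance (by simp; omega),
      show φ (b + 1) = 0 from embed_apply_of_notMem (by simp), smul_zero]
  · exact heig x ⟨hx.1, by omega⟩

theorem noIncoming_of_support_subset {φ : QWState} (hφ : Function.support φ ⊆ Set.Icc a b) :
    NoIncoming a b φ := by
  have hout {x : ℤ} (hx : x ∉ Set.Icc a b) : φ x = 0 := Function.notMem_support.1 (hx ∘ (hφ ·))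
  exact ⟨fun x hx => by simp [hout (x := x) (by simp; omega)],
    fun x hx => by simp [hout (x := x) (by simp; omega)]⟩

theorem coin_eq_one_of_right_lt (hJC : ∀ x : ℤ, C x ≠ 1 → a ≤ x ∧ x ≤ b) {x : ℤ} (hx : b < x) :
    C x = 1 :=
  by_contra fun h => absurd (hJC x h).2 (by omega)

theorem coin_eq_one_of_lt_left (hJC : ∀ x : ℤ, C x ≠ 1 → a ≤ x ∧ x ≤ b) {x : ℤ} (hx : x < a) :
    C x = 1 :=
  by_contra fun h => absurd (hJC x h).1 (by omega)

theorem NoIncoming.qwalk (hJC : ∀ x : ℤ, C x ≠ 1 → a ≤ x ∧ x ≤ b) {φ : QWState}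
    (hφ : NoIncoming a b φ) : NoIncoming a b (qwalk C φ) := by
  refine ⟨fun x hx => ?_, fun x hx => ?_⟩
  · rw [qwalk_apply_zero, coin_eq_one_of_right_lt hJC (by omega), one_mulVec, hφ.1 _ (by omega)]
  · rw [qwalk_apply_one, coin_eq_one_of_lt_left hJC (by omega), one_mulVec, hφ.2 _ (by omega)]

theorem restrictIcc_qwalk (hJC : ∀ x : ℤ, C x ≠ 1 → a ≤ x ∧ x ≤ b)
    {M : Module.End ℂ (↥(Set.Icc a b) → Fin 2 → ℂ)}
    (hM : ∀ f : ↥(Set.Icc a b) → Fin 2 → ℂ, ∀ z : ↥(Set.Icc a b),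
      M f z = qwalk C (embed a b f) (z : ℤ))
    {φ : QWState} (hφ : NoIncoming a b φ) :
    restrictIcc a b (qwalk C φ) = M (restrictIcc a b φ) := by
  funext z i
  obtain ⟨z, hza, hzb⟩ := z
  rw [hM]
  fin_cases i
  · show (C (z + 1) *ᵥ φ (z + 1)) 0 = (C (z + 1) *ᵥ embed a b (restrictIcc a b φ) (z + 1)) 0
    obtain hz | rfl := lt_or_eq_of_le hzb
    · rw [embed_apply_of_mem ⟨by omega, by omega⟩]; rfl
    · rw [embed_apply_of_notMem (by simp), mulVec_zero, coin_eq_one_of_right_lt hJC (by omega),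
        one_mulVec, hφ.1 _ (by omega)]
      rfl
  · show (C (z - 1) *ᵥ φ (z - 1)) 1 = (C (z - 1) *ᵥ embed a b (restrictIcc a b φ) (z - 1)) 1
    obtain hz | rfl := lt_or_eq_of_le hza
    · rw [embed_apply_of_mem ⟨by omega, by omega⟩]; rfl
    · rw [embed_apply_of_notMem (by simp), mulVec_zero, coin_eq_one_of_lt_left hJC (by omega),
        one_mulVec, hφ.2 _ (by omega)]
      rfl

theorem restrictIcc_iterate_qwalk (hJC : ∀ x : ℤ, C x ≠ 1 → a ≤ x ∧ x ≤ b)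
    {M : Module.End ℂ (↥(Set.Icc a b) → Fin 2 → ℂ)}
    (hM : ∀ f : ↥(Set.Icc a b) → Fin 2 → ℂ, ∀ z : ↥(Set.Icc a b),
      M f z = qwalk C (embed a b f) (z : ℤ))
    {ψ : QWState} (hψ : NoIncoming a b ψ) (n : ℕ) :
    restrictIcc a b ((qwalk C)^[n] ψ) = (M ^ n) (restrictIcc a b ψ) := by
  induction n generalizing ψ with
  | zero => rfl
  | succ n ih =>
    rw [Function.iterate_succ_apply, ih (hψ.qwalk hJC), restrictIcc_qwalk hJC hM hψ, pow_succ,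
      Module.End.mul_apply]

end QuantumWalk

theorem survival_probability_decay_general
    (C : ℤ → Matrix (Fin 2) (Fin 2) ℂ) (hC : CoinAssumption C)
    (ψ : QWState)
    (a b : ℤ)
    (hJψ : ∀ x : ℤ, ψ x ≠ 0 → a ≤ x ∧ x ≤ b)
    (hJC : ∀ x : ℤ, C x ≠ 1 → a ≤ x ∧ x ≤ b)
    (M : Module.End ℂ (↥(Set.Icc a b) → Fin 2 → ℂ))
    (hM : ∀ f : ↥(Set.Icc a b) → Fin 2 → ℂ, ∀ z : ↥(Set.Icc a b),
      M f z = qwalk C (embed a b f) (z : ℤ))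
    (Λ₀ : ℝ) (m₀ : ℕ)
    (hΛ₀ub : ∀ lam : ℂ, lam ≠ 0 → M.HasEigenvalue lam → ‖lam‖ ≤ Λ₀)
    (hΛ₀mem : (∃ lam : ℂ, lam ≠ 0 ∧ M.HasEigenvalue lam ∧ ‖lam‖ = Λ₀) ∨
      ((¬ ∃ lam : ℂ, lam ≠ 0 ∧ M.HasEigenvalue lam) ∧ Λ₀ = 0))
    (hm₀ub : ∀ lam : ℂ, lam ≠ 0 → M.HasEigenvalue lam → ‖lam‖ = Λ₀ →
      Module.finrank ℂ ↥(M.maxGenEigenspace lam) ≤ m₀) :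
    Λ₀ < 1 ∧
      ∃ Mc : ℝ, 0 < Mc ∧ ∃ n₀ : ℕ, ∀ n : ℕ, n₀ ≤ n →
        Real.sqrt (∑ x ∈ Finset.Icc a b,
            (‖(qwalk C)^[n] ψ x 0‖ ^ 2 + ‖(qwalk C)^[n] ψ x 1‖ ^ 2))
          ≤ Mc * (n : ℝ) ^ (m₀ - 1) * Λ₀ ^ n := by
  have hΛ₀ : 0 ≤ Λ₀ := by
    rcases hΛ₀mem with ⟨lam, -, -, rfl⟩ | ⟨-, rfl⟩
    exacts [norm_nonneg lam, le_rfl]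
  refine ⟨?_, ?_⟩
  · rcases hΛ₀mem with ⟨lam, hlam, hev, rfl⟩ | ⟨-, rfl⟩
    exacts [norm_lt_one_of_hasEigenvalue hC hM hlam hev, one_pos]
  have hO : (fun n : ℕ => Real.sqrt (normSqOn (Finset.Icc a b) ((qwalk C)^[n] ψ))) =O[atTop]
      fun n => (n : ℝ) ^ (m₀ - 1) * Λ₀ ^ n := by
    refine (IsBigO.of_bound (Real.sqrt (2 * (Finset.Icc a b).card)) (.of_forall fun n => ?_)).trans
      (isBigO_pow_apply M hΛ₀ub hm₀ub (restrictIcc a b ψ))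
    rw [Real.norm_of_nonneg (Real.sqrt_nonneg _),
      ← restrictIcc_iterate_qwalk hJC hM (noIncoming_of_support_subset fun x hx => hJψ x hx)]
    exact sqrt_normSqOn_Icc_le _
  obtain ⟨c, hc, hbound⟩ := hO.exists_pos
  obtain ⟨n₀, hn₀⟩ := eventually_atTop.1 hbound.bound
  refine ⟨c, hc, n₀, fun n hn => ?_⟩
  have := hn₀ n hn
  rw [Real.norm_of_nonneg (Real.sqrt_nonneg _), Real.norm_of_nonneg (by positivity)] at this
  simpa only [normSqOn, Fin.sum_univ_two, mul_assoc] using this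

/-- Decay of the survival probability: with M_J = 1_J U 1_J on states supported in
J = [a,b] ⊇ supp ψ ∪ chs(C−I₂), Λ₀ the largest modulus of a nonzero eigenvalue of M_J
(Λ₀ = 0 if none) and m₀ the largest algebraic multiplicity among nonzero eigenvalues of
modulus Λ₀ (m₀ = 1 if Λ₀ = 0), one has Λ₀ < 1 and
‖1_J U^n ψ‖ ≤ M n^{m₀−1} Λ₀^n for large n. -/
theorem survival_probability_decay
    (C : ℤ → Matrix (Fin 2) (Fin 2) ℂ) (hC : CoinAssumption C)
    (ψ : QWState) (hψfin : Set.Finite {x : ℤ | ψ x ≠ 0})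
    (a b : ℤ)
    (hJψ : ∀ x : ℤ, ψ x ≠ 0 → a ≤ x ∧ x ≤ b)
    (hJC : ∀ x : ℤ, C x ≠ 1 → a ≤ x ∧ x ≤ b)
    (M : Module.End ℂ (↥(Set.Icc a b) → Fin 2 → ℂ))
    (hM : ∀ f : ↥(Set.Icc a b) → Fin 2 → ℂ, ∀ z : ↥(Set.Icc a b),
      M f z = qwalk C (embed a b f) (z : ℤ))
    (Λ₀ : ℝ) (m₀ : ℕ)
    (hΛ₀ub : ∀ lam : ℂ, lam ≠ 0 → M.HasEigenvalue lam → ‖lam‖ ≤ Λ₀)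
    (hΛ₀mem : (∃ lam : ℂ, lam ≠ 0 ∧ M.HasEigenvalue lam ∧ ‖lam‖ = Λ₀) ∨
      ((¬ ∃ lam : ℂ, lam ≠ 0 ∧ M.HasEigenvalue lam) ∧ Λ₀ = 0))
    (hm₀ub : ∀ lam : ℂ, lam ≠ 0 → M.HasEigenvalue lam → ‖lam‖ = Λ₀ →
      Module.finrank ℂ ↥(M.maxGenEigenspace lam) ≤ m₀)
    (hm₀mem : (∃ lam : ℂ, lam ≠ 0 ∧ M.HasEigenvalue lam ∧ ‖lam‖ = Λ₀ ∧
        Module.finrank ℂ ↥(M.maxGenEigenspace lam) = m₀) ∨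
      ((¬ ∃ lam : ℂ, lam ≠ 0 ∧ M.HasEigenvalue lam) ∧ m₀ = 1)) :
    Λ₀ < 1 ∧
      ∃ Mc : ℝ, 0 < Mc ∧ ∃ n₀ : ℕ, ∀ n : ℕ, n₀ ≤ n →
        Real.sqrt (∑ x ∈ Finset.Icc a b,
            (‖(qwalk C)^[n] ψ x 0‖ ^ 2 + ‖(qwalk C)^[n] ψ x 1‖ ^ 2))
          ≤ Mc * (n : ℝ) ^ (m₀ - 1) * Λ₀ ^ n :=
  survival_probability_decay_general C hC ψ a b hJψ hJC M hM Λ₀ m₀ hΛ₀ub hΛ₀mem hm₀ub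
end
end

section
/- (Time evolution of restricted generalized resonant states.) Let C : ℤ → U(2) satisfy the standing Assumption and let U = S∘C. Let λ ∈ ℂ∖{0}, let m ≥ 1, and let φ_{λ,1}, …, φ_{λ,m} : ℤ → ℂ² be outgoing maps with N₁(supp♭φ_{λ,k}) ⊆ chs(C−I₂) satisfying the Jordan chain relations (U−λ)φ_{λ,k} = φ_{λ,k−1} for 1 ≤ k ≤ m, with the convention φ_{λ,0} = 0. Then for every bounded interval J ⊇ chs(C−I₂), every 1 ≤ k ≤ m, and every n ∈ ℕ: U^n(1_J φ_{λ,k}) = λ^n · 1_{N_n(J)} Σ_{l=0}^{k−1} binom(n,l) λ^{−l} φ_{λ,k−l}. In particular, for a resonant state φ_λ (i.e. an outgoing solution of Uφ_λ = λφ_λ with N₁(supp♭φ_λ) ⊆ chs(C−I₂)) one has U^n(1_J φ_λ) = λ^n (1_{N_n(J)} φ_λ). -/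
noncomputable section

open scoped ComplexConjugate

lemma qwalk_smul (C : ℤ → Matrix (Fin 2) (Fin 2) ℂ) (c : ℂ) (ψ : QWState) (x : ℤ) (i : Fin 2) :
    qwalk C (fun y j => c * ψ y j) x i = c * qwalk C ψ x i := by
  fin_cases i <;> simp [qwalk, Matrix.mulVec, dotProduct] <;> ring

lemma qwalk_sum (C : ℤ → Matrix (Fin 2) (Fin 2) ℂ) (K : ℕ) (f : ℕ → QWState) (x : ℤ) (i : Fin 2) :
    qwalk C (fun y j => ∑ l ∈ Finset.range K, f l y j) x i
      = ∑ l ∈ Finset.range K, qwalk C (f l) x i := by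
  fin_cases i <;>
    simp [qwalk, Matrix.mulVec, dotProduct, Finset.mul_sum, Finset.sum_add_distrib]

lemma pascal_key (lam : ℂ) (hlam : lam ≠ 0) (n k' : ℕ) (F : ℕ → ℂ) (hF0 : F 0 = 0) :
    ∑ l ∈ Finset.range (k' + 1),
        (n.choose l : ℂ) * lam ^ (-(l : ℤ)) * (lam * F (k' + 1 - l) + F (k' + 1 - l - 1))
      = lam * ∑ l ∈ Finset.range (k' + 1),
          ((n + 1).choose l : ℂ) * lam ^ (-(l : ℤ)) * F (k' + 1 - l) := by
  have hz : ∀ l : ℕ, lam ^ (-(l : ℤ)) = lam * lam ^ (-((l + 1 : ℕ) : ℤ)) := fun l => by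
    rw [show (-((l : ℕ) : ℤ)) = 1 + -((l + 1 : ℕ) : ℤ) by push_cast; ring,
      zpow_add₀ hlam, zpow_one]
  simp only [mul_add]
  rw [Finset.sum_add_distrib]
  conv_lhs => rw [Finset.sum_range_succ', Finset.sum_range_succ]
  conv_rhs => rw [Finset.mul_sum, Finset.sum_range_succ']
  have hlast : (n.choose k' : ℂ) * lam ^ (-(k' : ℤ)) * F (k' + 1 - k' - 1) = 0 := by
    rw [show k' + 1 - k' - 1 = 0 by omega, hF0, mul_zero]
  rw [hlast, add_zero]
  have hterm : ∀ l ∈ Finset.range k',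
      (n.choose (l + 1) : ℂ) * lam ^ (-((l + 1 : ℕ) : ℤ)) * (lam * F (k' + 1 - (l + 1)))
        + (n.choose l : ℂ) * lam ^ (-(l : ℤ)) * F (k' + 1 - l - 1)
      = lam * (((n + 1).choose (l + 1) : ℂ) * lam ^ (-((l + 1 : ℕ) : ℤ)) * F (k' + 1 - (l + 1))) := by
    intro l _
    rw [show k' + 1 - (l + 1) = k' - l by omega, show k' + 1 - l - 1 = k' - l by omega,
      Nat.choose_succ_succ, hz l]
    push_cast
    ring
  have hsum : (∑ l ∈ Finset.range k',
        (n.choose (l + 1) : ℂ) * lam ^ (-((l + 1 : ℕ) : ℤ)) * (lam * F (k' + 1 - (l + 1))))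
      + ∑ l ∈ Finset.range k',
        (n.choose l : ℂ) * lam ^ (-(l : ℤ)) * F (k' + 1 - l - 1)
      = ∑ l ∈ Finset.range k',
        lam * (((n + 1).choose (l + 1) : ℂ) * lam ^ (-((l + 1 : ℕ) : ℤ)) * F (k' + 1 - (l + 1))) := by
    rw [← Finset.sum_add_distrib]
    exact Finset.sum_congr rfl hterm
  simp only [Nat.choose_zero_right, Nat.cast_one, Nat.cast_zero, neg_zero, zpow_zero,
    one_mul, Nat.sub_zero] at *
  linear_combination hsum

/-- Time evolution of restricted generalized resonant states: for a Jordan chain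
(φ_{λ,1},…,φ_{λ,m}) of outgoing maps with N₁(supp♭φ_{λ,k}) ⊆ chs(C−I₂) and any
bounded interval J = [a,b] ⊇ chs(C−I₂),
U^n(1_J φ_{λ,k}) = λ^n 1_{N_n(J)} Σ_{l=0}^{k−1} binom(n,l) λ^{−l} φ_{λ,k−l}. -/
theorem time_evolution_of_restricted_generalized_resonant_states
    (C : ℤ → Matrix (Fin 2) (Fin 2) ℂ) (hC : CoinAssumption C)
    (lam : ℂ) (hlam : lam ≠ 0)
    (m : ℕ) (hm : 1 ≤ m)
    (φ : ℕ → QWState) (hφ0 : φ 0 = 0)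
    (hout : ∀ k : ℕ, 1 ≤ k → k ≤ m → Outgoing (φ k))
    (hinc : ∀ k : ℕ, 1 ≤ k → k ≤ m → ∀ z : ℤ,
      (∃ x : ℤ, φ k x 1 ≠ 0 ∧ x - 1 ≤ z) → (∃ y : ℤ, φ k y 0 ≠ 0 ∧ z ≤ y + 1) →
      z ∈ chsSet C)
    (hchain : ∀ k : ℕ, 1 ≤ k → k ≤ m → ∀ x : ℤ, ∀ i : Fin 2,
      qwalk C (φ k) x i = lam * φ k x i + φ (k - 1) x i)
    (a b : ℤ) (hJC : ∀ x ∈ chsSet C, a ≤ x ∧ x ≤ b) :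
    ∀ k : ℕ, 1 ≤ k → k ≤ m → ∀ n : ℕ, ∀ x : ℤ, ∀ i : Fin 2,
      (qwalk C)^[n] (fun y j => jind a b y * φ k y j) x i
        = lam ^ n * (jind (a - n) (b + n) x *
            ∑ l ∈ Finset.range k, (n.choose l : ℂ) * lam ^ (-(l : ℤ)) * φ (k - l) x i) := by
  -- outside [a,b] the coin is trivial
  have hCone : ∀ y : ℤ, (y < a ∨ b < y) → C y = 1 := by
    intro y hy
    by_contra h
    have := hJC y ⟨y, y, h, h, le_refl _, le_refl _⟩
    omega
  -- chain recursions in the trivial-coin region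
  have hrecL : ∀ j : ℕ, 1 ≤ j → j ≤ m → ∀ x : ℤ, b ≤ x →
      φ j (x + 1) 0 = lam * φ j x 0 + φ (j - 1) x 0 := by
    intro j h1 h2 x hx
    have h := hchain j h1 h2 x 0
    have hone : C (x + 1) = 1 := hCone _ (Or.inr (by omega))
    simpa [qwalk, hone, Matrix.one_mulVec] using h
  have hrecR : ∀ j : ℕ, 1 ≤ j → j ≤ m → ∀ x : ℤ, x ≤ a →
      φ j (x - 1) 1 = lam * φ j x 1 + φ (j - 1) x 1 := by
    intro j h1 h2 x hx
    have h := hchain j h1 h2 x 1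
    have hone : C (x - 1) = 1 := hCone _ (Or.inl (by omega))
    simpa [qwalk, hone, Matrix.one_mulVec] using h
  -- support lemmas
  have hsuppL : ∀ j : ℕ, j ≤ m → ∀ x : ℤ, b ≤ x → φ j x 0 = 0 := by
    intro j
    induction j with
    | zero => intro _ x _; simp [hφ0]
    | succ j ih =>
      intro hj x hx
      obtain ⟨r, hr0, hr⟩ := hout (j + 1) (by omega) hj
      have hiter : ∀ N : ℕ, φ (j + 1) (x + N) 0 = lam ^ N * φ (j + 1) x 0 := by
        intro N
        induction N with
        | zero => simp
        | succ N ihN =>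
          have hx' : b ≤ x + N := by omega
          have h := hrecL (j + 1) (by omega) hj (x + N) hx'
          simp only [Nat.add_sub_cancel] at h
          have hz : φ j (x + (N : ℤ)) 0 = 0 := ih (by omega) _ hx'
          rw [show (x + ((N : ℕ) + 1 : ℕ) : ℤ) = (x + N) + 1 by push_cast; ring, h, hz, ihN]
          ring
      set N : ℕ := (r - x).toNat + 1 with hN
      have hbig : r < x + N := by omega
      have h0 : φ (j + 1) (x + N) 0 = 0 := (hr _ hbig).1
      have heq := hiter N
      rw [h0] at heq
      rcases mul_eq_zero.mp heq.symm with h | h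
      · exact absurd h (pow_ne_zero _ hlam)
      · exact h
  have hsuppR : ∀ j : ℕ, j ≤ m → ∀ x : ℤ, x ≤ a → φ j x 1 = 0 := by
    intro j
    induction j with
    | zero => intro _ x _; simp [hφ0]
    | succ j ih =>
      intro hj x hx
      obtain ⟨r, hr0, hr⟩ := hout (j + 1) (by omega) hj
      have hiter : ∀ N : ℕ, φ (j + 1) (x - N) 1 = lam ^ N * φ (j + 1) x 1 := by
        intro N
        induction N with
        | zero => simp
        | succ N ihN =>
          have hx' : x - N ≤ a := by omega
          have h := hrecR (j + 1) (by omega) hj (x - N) hx'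
          simp only [Nat.add_sub_cancel] at h
          have hz : φ j (x - (N : ℤ)) 1 = 0 := ih (by omega) _ hx'
          rw [show (x - ((N : ℕ) + 1 : ℕ) : ℤ) = (x - N) - 1 by push_cast; ring, h, hz, ihN]
          ring
      set N : ℕ := (r + x).toNat + 1 with hN
      have hbig : r < -(x - N) := by omega
      have h0 : φ (j + 1) (x - N) 1 = 0 := by
        have := (hr (-(x - N)) hbig).2
        simpa using this
      have heq := hiter N
      rw [h0] at heq
      rcases mul_eq_zero.mp heq.symm with h | h
      · exact absurd h (pow_ne_zero _ hlam)
      · exact h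
  -- the key restriction-commutation step
  have hstep : ∀ (a' b' : ℤ), a' ≤ a → b ≤ b' → ∀ ψ : QWState,
      (∀ x : ℤ, b ≤ x → ψ x 0 = 0) → (∀ x : ℤ, x ≤ a → ψ x 1 = 0) →
      ∀ x : ℤ, ∀ i : Fin 2,
        qwalk C (fun y j => jind a' b' y * ψ y j) x i
          = jind (a' - 1) (b' + 1) x * qwalk C ψ x i := by
    intro a' b' ha' hb' ψ hψL hψR x i
    fin_cases i
    · show (C (x + 1)).mulVec (fun j => jind a' b' (x + 1) * ψ (x + 1) j) 0
        = jind (a' - 1) (b' + 1) x * (C (x + 1)).mulVec (ψ (x + 1)) 0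
      have hlin : (C (x + 1)).mulVec (fun j => jind a' b' (x + 1) * ψ (x + 1) j) 0
          = jind a' b' (x + 1) * (C (x + 1)).mulVec (ψ (x + 1)) 0 := by
        simp [Matrix.mulVec, dotProduct]; ring
      rw [hlin]
      unfold jind
      split_ifs with h1 h2 h2
      · rfl
      · omega
      · have hxb : b < x + 1 := by omega
        rw [hCone (x + 1) (Or.inr hxb), Matrix.one_mulVec, hψL (x + 1) (by omega)]
        ring
      · ring
    · show (C (x - 1)).mulVec (fun j => jind a' b' (x - 1) * ψ (x - 1) j) 1
        = jind (a' - 1) (b' + 1) x * (C (x - 1)).mulVec (ψ (x - 1)) 1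
      have hlin : (C (x - 1)).mulVec (fun j => jind a' b' (x - 1) * ψ (x - 1) j) 1
          = jind a' b' (x - 1) * (C (x - 1)).mulVec (ψ (x - 1)) 1 := by
        simp [Matrix.mulVec, dotProduct]; ring
      rw [hlin]
      unfold jind
      split_ifs with h1 h2 h2
      · rfl
      · omega
      · have hxa : x - 1 < a := by omega
        rw [hCone (x - 1) (Or.inl hxa), Matrix.one_mulVec, hψR (x - 1) (by omega)]
        ring
      · ring
  -- main induction
  intro k hk1 hkm n
  induction n with
  | zero =>
    intro x i
    simp only [Function.iterate_zero, id_eq, pow_zero, one_mul, Nat.cast_zero, sub_zero,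
      add_zero]
    rw [Finset.sum_eq_single 0]
    · simp
    · intro l _ hl
      have : Nat.choose 0 l = 0 := Nat.choose_eq_zero_of_lt (by omega)
      simp [this]
    · intro h; exact absurd (Finset.mem_range.mpr (by omega)) h
  | succ n ih =>
    intro x i
    rw [Function.iterate_succ_apply']
    have hIH : (qwalk C)^[n] (fun y j => jind a b y * φ k y j)
        = fun y j => lam ^ n * (jind (a - n) (b + n) y *
            ∑ l ∈ Finset.range k, (n.choose l : ℂ) * lam ^ (-(l : ℤ)) * φ (k - l) y j) :=
      funext fun y => funext fun j => ih y j
    rw [hIH]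
    have h1 : qwalk C (fun y j => lam ^ n * (jind (a - n) (b + n) y *
          ∑ l ∈ Finset.range k, (n.choose l : ℂ) * lam ^ (-(l : ℤ)) * φ (k - l) y j)) x i
        = lam ^ n * qwalk C (fun y j => jind (a - n) (b + n) y *
          ∑ l ∈ Finset.range k, (n.choose l : ℂ) * lam ^ (-(l : ℤ)) * φ (k - l) y j) x i :=
      qwalk_smul C _ _ x i
    rw [h1]
    set S : QWState := fun y j =>
      ∑ l ∈ Finset.range k, (n.choose l : ℂ) * lam ^ (-(l : ℤ)) * φ (k - l) y j with hS
    have hSL : ∀ y : ℤ, b ≤ y → S y 0 = 0 := by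
      intro y hy
      apply Finset.sum_eq_zero
      intro l _
      rw [hsuppL (k - l) (by omega) y hy]
      ring
    have hSR : ∀ y : ℤ, y ≤ a → S y 1 = 0 := by
      intro y hy
      apply Finset.sum_eq_zero
      intro l _
      rw [hsuppR (k - l) (by omega) y hy]
      ring
    rw [hstep (a - n) (b + n) (by omega) (by omega) S hSL hSR x i]
    have h2 : qwalk C S x i = ∑ l ∈ Finset.range k,
        (n.choose l : ℂ) * lam ^ (-(l : ℤ)) * (lam * φ (k - l) x i + φ (k - l - 1) x i) := by
      rw [hS]
      rw [qwalk_sum C k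
        (fun l => fun y j => (n.choose l : ℂ) * lam ^ (-(l : ℤ)) * φ (k - l) y j) x i]
      refine Finset.sum_congr rfl fun l hl => ?_
      have hlk : l < k := Finset.mem_range.mp hl
      rw [qwalk_smul C _ (φ (k - l)) x i, hchain (k - l) (by omega) (by omega) x i]
    rw [h2]
    have hind : jind (a - n - 1) (b + n + 1) x
        = jind (a - ((n + 1 : ℕ) : ℤ)) (b + ((n + 1 : ℕ) : ℤ)) x := by
      rw [show a - (n : ℤ) - 1 = a - ((n + 1 : ℕ) : ℤ) by push_cast; ring,
        show b + (n : ℤ) + 1 = b + ((n + 1 : ℕ) : ℤ) by push_cast; ring]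
    rw [hind]
    obtain ⟨k', rfl⟩ : ∃ k', k = k' + 1 := ⟨k - 1, by omega⟩
    rw [pascal_key lam hlam n k' (fun j => φ j x i) (by show φ 0 x i = 0; rw [hφ0]; rfl)]
    ring
end
end
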